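/- arXiv:math/9909101 — 7 statements merged into one kernel-verified Lean document; each statement's English description precedes it below -/
import Mathlib

section
/- With Ĥ = ⨁_{n≥1} H, Ĵ = J ⊕ (−I) ⊕ (−I) ⊕ ⋯, and p the projection onto the first coordinate: if L is a nontrivial positive subspace of (Ĥ, Ĵ), then pL is a nontrivial positive subspace of (H, J). -/
/-!
If `y` agrees with `-x` off the coordinate `i`, then `y + x` is supported at `i`, so
`re ⟪x, y⟫ = re ⟪x i, y i⟫ + ‖x i‖² - ‖x‖²`. Since `‖x i‖ ≤ ‖x‖`, positivity of `x` for `Ĵ`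
forces positivity of `x 0` for `J`, and if `x 0 = 0` it forces `‖x‖² ≤ 0`.
-/

open RCLike

namespace lp

variable {ι 𝕜 : Type*} [RCLike 𝕜] {G : ι → Type*} [∀ i, NormedAddCommGroup (G i)]
  [∀ i, InnerProductSpace 𝕜 (G i)] {x y : lp G 2} {i : ι}

theorem re_inner_eq_of_apply_eq_neg [DecidableEq ι] (hy : ∀ j, j ≠ i → y j = -x j) :
    re (inner 𝕜 x y) = re (inner 𝕜 (x i) (y i)) + ‖x i‖ ^ 2 - ‖x‖ ^ 2 := by
  have hsingle : y + x = lp.single 2 i (y i + x i) := by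
    ext j
    by_cases hj : j = i
    · subst hj
      simp
    · simp [hy j hj, hj]
  calc re (inner 𝕜 x y) = re (inner 𝕜 x (y + x)) - re (inner 𝕜 x x) := by
        rw [inner_add_right, map_add, add_sub_cancel_right]
    _ = re (inner 𝕜 (x i) (y i)) + ‖x i‖ ^ 2 - ‖x‖ ^ 2 := by
        rw [hsingle, lp.inner_single_right, inner_add_right, map_add, inner_self_eq_norm_sq,
          inner_self_eq_norm_sq]

theorem re_inner_le_re_inner_apply_of_apply_eq_neg (hy : ∀ j, j ≠ i → y j = -x j) :
    re (inner 𝕜 x y) ≤ re (inner 𝕜 (x i) (y i)) := by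
  classical
  have hxi : ‖x i‖ ≤ ‖x‖ := lp.norm_apply_le_norm two_ne_zero x i
  rw [re_inner_eq_of_apply_eq_neg hy]
  nlinarith [norm_nonneg (x i)]

theorem eq_zero_of_apply_eq_neg_of_re_inner_nonneg (hy : ∀ j, j ≠ i → y j = -x j)
    (hxi : x i = 0) (hxy : 0 ≤ re (inner 𝕜 x y)) : x = 0 := by
  classical
  rw [re_inner_eq_of_apply_eq_neg hy, hxi] at hxy
  simpa using hxy

end lp

theorem image_of_nontrivial_positive_subspace_general {H : Type*} [NormedAddCommGroup H]
    [InnerProductSpace ℂ H]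
    (J : H →L[ℂ] H)
    (Jhat : lp (fun _ : ℕ => H) 2 →L[ℂ] lp (fun _ : ℕ => H) 2)
    (hJhat0 : ∀ f : lp (fun _ : ℕ => H) 2, (Jhat f) 0 = J (f 0))
    (hJhatn : ∀ (f : lp (fun _ : ℕ => H) 2) (n : ℕ), n ≠ 0 → (Jhat f) n = -(f n))
    (p : lp (fun _ : ℕ => H) 2 →L[ℂ] H)
    (hp : ∀ f : lp (fun _ : ℕ => H) 2, p f = f 0)
    (L : Submodule ℂ (lp (fun _ : ℕ => H) 2))
    (hLpos : ∀ x ∈ L, 0 ≤ (inner ℂ x (Jhat x) : ℂ).re)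
    (hLne : L ≠ ⊥) :
    (∀ y ∈ L.map p.toLinearMap, 0 ≤ (inner ℂ y (J y) : ℂ).re) ∧ L.map p.toLinearMap ≠ ⊥ := by
  constructor
  · rintro _ ⟨x, hxL, rfl⟩
    have hle := lp.re_inner_le_re_inner_apply_of_apply_eq_neg (𝕜 := ℂ) (hJhatn x)
    rw [hJhat0] at hle
    rw [ContinuousLinearMap.coe_coe, hp]
    exact (hLpos x hxL).trans hle
  · intro hbot
    obtain ⟨x, hxL, hx⟩ := Submodule.exists_mem_ne_zero_of_ne_bot hLne
    have hx0 : x 0 = 0 := by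
      rw [← hp, ← ContinuousLinearMap.coe_coe, ← Submodule.mem_bot ℂ, ← hbot]
      exact Submodule.mem_map_of_mem hxL
    exact hx (lp.eq_zero_of_apply_eq_neg_of_re_inner_nonneg (𝕜 := ℂ) (hJhatn x) hx0 (hLpos x hxL))

/-- with `Ĥ = ⨁_{n≥1} H`, `Ĵ = J ⊕ (-I) ⊕ ⋯` and `p` the first-coordinate
projection, the image under `p` of a nontrivial positive subspace of `(Ĥ, Ĵ)` is a
nontrivial positive subspace of `(H, J)`. -/
theorem image_of_nontrivial_positive_subspace {H : Type*} [NormedAddCommGroup H]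
    [InnerProductSpace ℂ H] [CompleteSpace H]
    (J : H →L[ℂ] H) (hJ : IsSelfAdjoint J) (hJ2 : J ∘L J = 1)
    (Jhat : lp (fun _ : ℕ => H) 2 →L[ℂ] lp (fun _ : ℕ => H) 2)
    (hJhat0 : ∀ f : lp (fun _ : ℕ => H) 2, (Jhat f) 0 = J (f 0))
    (hJhatn : ∀ (f : lp (fun _ : ℕ => H) 2) (n : ℕ), n ≠ 0 → (Jhat f) n = -(f n))
    (p : lp (fun _ : ℕ => H) 2 →L[ℂ] H)
    (hp : ∀ f : lp (fun _ : ℕ => H) 2, p f = f 0)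
    (L : Submodule ℂ (lp (fun _ : ℕ => H) 2))
    (hLpos : ∀ x ∈ L, 0 ≤ (inner ℂ x (Jhat x) : ℂ).re)
    (hLne : L ≠ ⊥) :
    (∀ y ∈ L.map p.toLinearMap, 0 ≤ (inner ℂ y (J y) : ℂ).re) ∧ L.map p.toLinearMap ≠ ⊥ :=
  image_of_nontrivial_positive_subspace_general J Jhat hJhat0 hJhatn p hp L hLpos hLne
end

section
/- With Ĥ = ⨁_{n≥1} H, Ĵ = J ⊕ (−I) ⊕ ⋯, canonical projection p and embedding j(x) = x ⊕ 0 ⊕ 0 ⊕ ⋯: if L is a maximal positive subspace of (Ĥ, Ĵ) with angular operator K : Ĥ₊ → Ĥ₋, then pL is a maximal positive subspace of (H, J) with angular operator pKj, and ‖pKj‖ ≤ ‖K‖ ≤ 1. -/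
open scoped ENNReal

variable {H : Type*} [NormedAddCommGroup H] [InnerProductSpace ℂ H] [CompleteSpace H]

/-- The positive component `Ĥ₊ = Hp ⊕ 0 ⊕ 0 ⊕ ⋯` of the direct-sum Krein space. -/
noncomputable def Hhatp (Hp : Submodule ℂ H) : Submodule ℂ (lp (fun _ : ℕ => H) 2) where
  carrier := {f | f 0 ∈ Hp ∧ ∀ n : ℕ, n ≠ 0 → f n = 0}
  add_mem' := by
    intro f g hf hg
    refine ⟨?_, fun n hn => ?_⟩
    · simpa [lp.coeFn_add, Pi.add_apply] using Hp.add_mem hf.1 hg.1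
    · simp [lp.coeFn_add, Pi.add_apply, hf.2 n hn, hg.2 n hn]
  zero_mem' := by
    refine ⟨?_, fun n hn => ?_⟩ <;> simp [lp.coeFn_zero]
  smul_mem' := by
    intro c f hf
    refine ⟨?_, fun n hn => ?_⟩
    · simpa [lp.coeFn_smul, Pi.smul_apply] using Hp.smul_mem c hf.1
    · simp [lp.coeFn_smul, Pi.smul_apply, hf.2 n hn]

/-- The negative component `Ĥ₋ = Hpᗮ ⊕ H ⊕ H ⊕ ⋯` of the direct-sum Krein space. -/
noncomputable def Hhatm (Hp : Submodule ℂ H) : Submodule ℂ (lp (fun _ : ℕ => H) 2) where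
  carrier := {f | f 0 ∈ Hpᗮ}
  add_mem' := by
    intro f g hf hg
    simpa [lp.coeFn_add, Pi.add_apply] using Hpᗮ.add_mem hf hg
  zero_mem' := by simp [lp.coeFn_zero, Set.mem_setOf_eq]
  smul_mem' := by
    intro c f hf
    simpa [lp.coeFn_smul, Pi.smul_apply] using Hpᗮ.smul_mem c hf

/-!
With respect to `E = U ⊕ Uᗮ` one has `re ⟪u + v, J (u + v)⟫ = ‖u‖² - ‖v‖²`, so the graph of a
contraction `U → Uᗮ` is `J`-nonnegative. Conversely, if a `J`-nonnegative subspace `M` contains the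
graph of some map `T : U → Uᗮ` and `m ∈ M` has `U`-component `u`, then `m - (u + T u)` lies in
`M ∩ Uᗮ`, where `J` is negative definite; so `M` is that graph. Every element of `Ĥ₊` is `j` of its
`0`-th coordinate, hence `p` maps the graph of `K` onto the graph of `pKj`, and `‖pKj‖ ≤ ‖K‖`
because `j` is isometric and `p` is contractive.
-/

section KreinGraph

variable {𝕜 E : Type*} [RCLike 𝕜] [NormedAddCommGroup E] [InnerProductSpace 𝕜 E]
  {U : Submodule 𝕜 E} {J : E →ₗ[𝕜] E}

open RCLike

theorem re_inner_add_map_add (hJp : ∀ x ∈ U, J x = x) (hJm : ∀ x ∈ Uᗮ, J x = -x)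
    (u : U) (v : Uᗮ) :
    re (inner 𝕜 ((u : E) + v) (J (u + v))) = ‖(u : E)‖ ^ 2 - ‖(v : E)‖ ^ 2 := by
  have huv : inner 𝕜 (u : E) (v : E) = 0 := Submodule.inner_right_of_mem_orthogonal u.2 v.2
  have hvu : inner 𝕜 (v : E) (u : E) = 0 := Submodule.inner_left_of_mem_orthogonal u.2 v.2
  rw [map_add, hJp u u.2, hJm v v.2, inner_add_left, inner_add_right, inner_add_right,
    inner_neg_right, inner_neg_right, huv, hvu]
  simp only [map_add, map_neg, inner_self_eq_norm_sq, neg_zero, add_zero, zero_add]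
  ring

theorem re_inner_map_nonneg_of_norm_le_one (hJp : ∀ x ∈ U, J x = x)
    (hJm : ∀ x ∈ Uᗮ, J x = -x) (T : U →L[𝕜] Uᗮ) (hT : ‖T‖ ≤ 1) (u : U) :
    0 ≤ re (inner 𝕜 ((u : E) + T u) (J (u + T u))) := by
  have hTu : ‖T u‖ ≤ ‖u‖ := T.le_of_opNorm_le hT u |>.trans_eq (one_mul _)
  rw [re_inner_add_map_add hJp hJm, sub_nonneg]
  exact pow_le_pow_left₀ (norm_nonneg _) hTu 2

theorem eq_zero_of_mem_orthogonal_of_re_inner_map_nonneg (hJm : ∀ x ∈ Uᗮ, J x = -x) {v : E}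
    (hv : v ∈ Uᗮ) (hpos : 0 ≤ re (inner 𝕜 v (J v))) : v = 0 := by
  rw [hJm v hv, inner_neg_right, map_neg, inner_self_eq_norm_sq, neg_nonneg] at hpos
  exact norm_eq_zero.mp (by nlinarith [norm_nonneg v])

theorem exists_eq_add_of_mem_of_re_inner_map_nonneg [U.HasOrthogonalProjection]
    (hJm : ∀ x ∈ Uᗮ, J x = -x) (T : U → Uᗮ) {M : Submodule 𝕜 E}
    (hM : ∀ y ∈ M, 0 ≤ re (inner 𝕜 y (J y))) (hTM : ∀ u : U, (u : E) + T u ∈ M)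
    {m : E} (hm : m ∈ M) : ∃ u : U, m = u + T u := by
  set u := U.orthogonalProjectionOnto m
  have hperp : m - (u + T u) ∈ Uᗮ := by
    rw [← sub_sub]
    refine Uᗮ.sub_mem ?_ (T u).2
    simpa only [Submodule.starProjection_apply] using U.sub_starProjection_mem_orthogonal m
  have hmem : m - (u + T u) ∈ M := M.sub_mem hm (hTM u)
  exact ⟨u, sub_eq_zero.mp (eq_zero_of_mem_orthogonal_of_re_inner_map_nonneg hJm hperp
    (hM _ hmem))⟩

end KreinGraph

section DirectSum

variable {E : Type*} [NormedAddCommGroup E] [InnerProductSpace ℂ E] (Hp : Submodule ℂ E)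

theorem single_zero_mem_Hhatp (x : Hp) : lp.single 2 0 (x : E) ∈ Hhatp Hp :=
  ⟨by simpa only [lp.single_apply_self] using x.2, fun _ hn => lp.single_apply_ne 2 0 _ hn⟩

noncomputable def Hhatp.single : Hp →L[ℂ] Hhatp Hp :=
  (lp.singleContinuousLinearMap ℂ (fun _ : ℕ => E) 2 0 ∘L Hp.subtypeL).codRestrict _
    (single_zero_mem_Hhatp Hp)

theorem Hhatp.coe_single (x : Hp) :
    (Hhatp.single Hp x : lp (fun _ : ℕ => E) 2) = lp.single 2 0 (x : E) :=
  rfl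

theorem Hhatp.single_apply_zero (f : Hhatp Hp) :
    Hhatp.single Hp ⟨(f : lp (fun _ : ℕ => E) 2) 0, f.2.1⟩ = f := by
  refine Subtype.ext <| lp.ext <| funext fun n => ?_
  rw [Hhatp.coe_single]
  rcases eq_or_ne n 0 with rfl | hn
  · exact lp.single_apply_self 2 0 _
  · rw [lp.single_apply_ne 2 0 _ hn, f.2.2 n hn]

theorem Hhatp.norm_single (x : Hp) : ‖Hhatp.single Hp x‖ = ‖x‖ :=
  lp.norm_single (E := fun _ : ℕ => E) (by norm_num) 0 (x : E)

noncomputable def Hhatm.evalZero : Hhatm Hp →L[ℂ] Hpᗮ :=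
  (lp.evalCLM ℂ (fun _ : ℕ => E) 2 0 ∘L (Hhatm Hp).subtypeL).codRestrict Hpᗮ fun f => f.2

noncomputable def compressAngular (K : Hhatp Hp →L[ℂ] Hhatm Hp) : Hp →L[ℂ] Hpᗮ :=
  Hhatm.evalZero Hp ∘L K ∘L Hhatp.single Hp

variable {Hp}

theorem coe_compressAngular_apply (K : Hhatp Hp →L[ℂ] Hhatm Hp) (x : Hp) :
    (compressAngular Hp K x : E) = (K (Hhatp.single Hp x) : lp (fun _ : ℕ => E) 2) 0 :=
  rfl

theorem norm_compressAngular_le (K : Hhatp Hp →L[ℂ] Hhatm Hp) : ‖compressAngular Hp K‖ ≤ ‖K‖ :=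
  ContinuousLinearMap.opNorm_le_bound _ (norm_nonneg K) fun x => calc
    ‖compressAngular Hp K x‖ = ‖(K (Hhatp.single Hp x) : lp (fun _ : ℕ => E) 2) 0‖ := rfl
    _ ≤ ‖K (Hhatp.single Hp x)‖ := lp.norm_apply_le_norm two_ne_zero _ 0
    _ ≤ ‖K‖ * ‖Hhatp.single Hp x‖ := K.le_opNorm _
    _ = ‖K‖ * ‖x‖ := by rw [Hhatp.norm_single]

theorem image_apply_zero_graph (K : Hhatp Hp →L[ℂ] Hhatm Hp) :
    (fun f : lp (fun _ : ℕ => E) 2 => f 0) ''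
        {f | ∃ xp : Hhatp Hp,
          f = (xp : lp (fun _ : ℕ => E) 2) + (K xp : lp (fun _ : ℕ => E) 2)} =
      {x | ∃ xp : Hp, x = (xp : E) + (compressAngular Hp K xp : E)} := by
  ext y
  constructor
  · rintro ⟨_, ⟨f, rfl⟩, rfl⟩
    refine ⟨⟨(f : lp (fun _ : ℕ => E) 2) 0, f.2.1⟩, ?_⟩
    rw [coe_compressAngular_apply, Hhatp.single_apply_zero]
    rfl
  · rintro ⟨x, rfl⟩
    refine ⟨_, ⟨Hhatp.single Hp x, rfl⟩, ?_⟩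
    show (Hhatp.single Hp x : lp (fun _ : ℕ => E) 2) 0 + _ = _
    rw [Hhatp.coe_single, lp.single_apply_self, coe_compressAngular_apply]

end DirectSum

theorem image_of_maximal_positive_subspace_general (Hp : Submodule ℂ H) [CompleteSpace Hp]
    (J : H →L[ℂ] H) (hJp : ∀ x ∈ Hp, J x = x) (hJm : ∀ x ∈ Hpᗮ, J x = -x)
    (p : lp (fun _ : ℕ => H) 2 →L[ℂ] H)
    (hp : ∀ f : lp (fun _ : ℕ => H) 2, p f = f 0)
    (j : H →L[ℂ] lp (fun _ : ℕ => H) 2)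
    (hj0 : ∀ x : H, (j x) 0 = x) (hjn : ∀ (x : H) (n : ℕ), n ≠ 0 → (j x) n = 0)
    (K : Hhatp Hp →L[ℂ] Hhatm Hp) (hK : ‖K‖ ≤ 1)
    (L : Submodule ℂ (lp (fun _ : ℕ => H) 2))
    (hLgraph : (L : Set (lp (fun _ : ℕ => H) 2)) =
      {x | ∃ xp : Hhatp Hp, x = (xp : lp (fun _ : ℕ => H) 2) + (K xp : lp (fun _ : ℕ => H) 2)}) :
    ∃ K' : Hp →L[ℂ] Hpᗮ,
      (∀ (xp : Hp) (y : Hhatp Hp), (y : lp (fun _ : ℕ => H) 2) = j xp →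
        (K' xp : H) = p (K y : lp (fun _ : ℕ => H) 2)) ∧
      ‖K'‖ ≤ ‖K‖ ∧ ‖K‖ ≤ 1 ∧
      ((L.map (p : lp (fun _ : ℕ => H) 2 →ₗ[ℂ] H) : Set H) = {x | ∃ xp : Hp, x = (xp : H) + (K' xp : H)}) ∧
      (∀ y ∈ L.map (p : lp (fun _ : ℕ => H) 2 →ₗ[ℂ] H), 0 ≤ (inner ℂ y (J y) : ℂ).re) ∧
      (∀ M : Submodule ℂ H, (∀ y ∈ M, 0 ≤ (inner ℂ y (J y) : ℂ).re) →
        L.map (p : lp (fun _ : ℕ => H) 2 →ₗ[ℂ] H) ≤ M → M = L.map (p : lp (fun _ : ℕ => H) 2 →ₗ[ℂ] H)) := by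
  have hj : ∀ x : Hp, j x = Hhatp.single Hp x := fun x => lp.ext <| funext fun n => by
    rw [Hhatp.coe_single]
    rcases eq_or_ne n 0 with rfl | hn
    · rw [hj0, lp.single_apply_self]
    · rw [hjn x n hn, lp.single_apply_ne 2 0 _ hn]
  have hgraph : (L.map (p : lp (fun _ : ℕ => H) 2 →ₗ[ℂ] H) : Set H) =
      {x | ∃ xp : Hp, x = (xp : H) + (compressAngular Hp K xp : H)} := by
    rw [Submodule.map_coe, hLgraph, ContinuousLinearMap.coe_coe, funext hp,
      image_apply_zero_graph]
  have hgraph_mem : ∀ xp : Hp, (xp : H) + compressAngular Hp K xp ∈ L.map (p : _ →ₗ[ℂ] H) :=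
    fun xp => by rw [← SetLike.mem_coe, hgraph]; exact ⟨xp, rfl⟩
  refine ⟨compressAngular Hp K, fun xp y hy => ?_, norm_compressAngular_le K, hK, hgraph, ?_,
    fun M hM hLM => le_antisymm (fun m hm => ?_) hLM⟩
  · rw [hp, coe_compressAngular_apply, (Subtype.ext (hy.trans (hj xp)) : y = _)]
  · intro y hy
    rw [← SetLike.mem_coe, hgraph] at hy
    obtain ⟨xp, rfl⟩ := hy
    exact re_inner_map_nonneg_of_norm_le_one (J := (J : H →ₗ[ℂ] H)) hJp hJm _
      ((norm_compressAngular_le K).trans hK) xp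
  · obtain ⟨xp, rfl⟩ := exists_eq_add_of_mem_of_re_inner_map_nonneg (J := (J : H →ₗ[ℂ] H)) hJm
      (compressAngular Hp K) hM (fun xp => hLM (hgraph_mem xp)) hm
    exact hgraph_mem xp

/-- if `L` is a maximal positive subspace of `(Ĥ, Ĵ)` with angular operator
`K : Ĥ₊ → Ĥ₋`, then `pL` is a maximal positive subspace of `(H, J)` with angular
operator `pKj`, and `‖pKj‖ ≤ ‖K‖ ≤ 1`. -/
theorem image_of_maximal_positive_subspace (Hp : Submodule ℂ H) [CompleteSpace Hp]
    (J : H →L[ℂ] H) (hJp : ∀ x ∈ Hp, J x = x) (hJm : ∀ x ∈ Hpᗮ, J x = -x)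
    (Jhat : lp (fun _ : ℕ => H) 2 →L[ℂ] lp (fun _ : ℕ => H) 2)
    (hJhat0 : ∀ f : lp (fun _ : ℕ => H) 2, (Jhat f) 0 = J (f 0))
    (hJhatn : ∀ (f : lp (fun _ : ℕ => H) 2) (n : ℕ), n ≠ 0 → (Jhat f) n = -(f n))
    (p : lp (fun _ : ℕ => H) 2 →L[ℂ] H)
    (hp : ∀ f : lp (fun _ : ℕ => H) 2, p f = f 0)
    (j : H →L[ℂ] lp (fun _ : ℕ => H) 2)
    (hj0 : ∀ x : H, (j x) 0 = x) (hjn : ∀ (x : H) (n : ℕ), n ≠ 0 → (j x) n = 0)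
    (K : Hhatp Hp →L[ℂ] Hhatm Hp) (hK : ‖K‖ ≤ 1)
    (L : Submodule ℂ (lp (fun _ : ℕ => H) 2))
    (hLgraph : (L : Set (lp (fun _ : ℕ => H) 2)) =
      {x | ∃ xp : Hhatp Hp, x = (xp : lp (fun _ : ℕ => H) 2) + (K xp : lp (fun _ : ℕ => H) 2)})
    (hLpos : ∀ x ∈ L, 0 ≤ (inner ℂ x (Jhat x) : ℂ).re)
    (hLmax : ∀ M : Submodule ℂ (lp (fun _ : ℕ => H) 2),
      (∀ x ∈ M, 0 ≤ (inner ℂ x (Jhat x) : ℂ).re) → L ≤ M → M = L) :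
    ∃ K' : Hp →L[ℂ] Hpᗮ,
      (∀ (xp : Hp) (y : Hhatp Hp), (y : lp (fun _ : ℕ => H) 2) = j xp →
        (K' xp : H) = p (K y : lp (fun _ : ℕ => H) 2)) ∧
      ‖K'‖ ≤ ‖K‖ ∧ ‖K‖ ≤ 1 ∧
      ((L.map (p : lp (fun _ : ℕ => H) 2 →ₗ[ℂ] H) : Set H) = {x | ∃ xp : Hp, x = (xp : H) + (K' xp : H)}) ∧
      (∀ y ∈ L.map (p : lp (fun _ : ℕ => H) 2 →ₗ[ℂ] H), 0 ≤ (inner ℂ y (J y) : ℂ).re) ∧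
      (∀ M : Submodule ℂ H, (∀ y ∈ M, 0 ≤ (inner ℂ y (J y) : ℂ).re) →
        L.map (p : lp (fun _ : ℕ => H) 2 →ₗ[ℂ] H) ≤ M → M = L.map (p : lp (fun _ : ℕ => H) 2 →ₗ[ℂ] H)) :=
  image_of_maximal_positive_subspace_general Hp J hJp hJm p hp j hj0 hjn K hK L hLgraph
end

section
/- Let T be a J-noncontraction on the Krein space H, let D := (T*JT − J)^{1/2} (the positive square root), and define V on Ĥ = ⨁_{n≥1} H by V(x₁ ⊕ x₂ ⊕ x₃ ⊕ ⋯) := Tx₁ ⊕ Dx₁ ⊕ x₂ ⊕ x₃ ⊕ ⋯. Then V is a bounded Ĵ-isometry on (Ĥ, Ĵ) (where Ĵ = J ⊕ (−I) ⊕ (−I) ⊕ ⋯), and T ∘ p = p ∘ V where p is the projection onto the first coordinate. -/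
open ContinuousLinearMap

/-
Since `D² = T*JT − J`, the indefinite square of `Tx` splits as
`[Tx, Tx]_J = [x, x]_J + ‖Dx‖²`. The form of `Ĵ` is `[x₀, x₀]_J − ∑_{n ≥ 1} ‖xₙ‖²`, so for
`V x = Tx₀ ⊕ Dx₀ ⊕ x₁ ⊕ ⋯` the extra term `‖Dx₀‖²` in the first coordinate is exactly cancelled
by the new second coordinate `Dx₀`, while the remaining coordinates are the shifted tail of `x`.
-/

theorem inner_apply_sub_inner_defect_eq {𝕜 E : Type*} [RCLike 𝕜] [NormedAddCommGroup E]
    [InnerProductSpace 𝕜 E] [CompleteSpace E] {J T D : E →L[𝕜] E} (hD : IsSelfAdjoint D)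
    (hDsq : D ∘L D = adjoint T ∘L J ∘L T - J) (x : E) :
    inner 𝕜 (T x) (J (T x)) - inner 𝕜 (D x) (D x) = inner 𝕜 x (J x) := by
  have hDD : inner 𝕜 (D x) (D x) = inner 𝕜 x ((D ∘L D) x) := hD.isSymmetric x (D x)
  rw [hDD, hDsq, ← adjoint_inner_right]
  simp [inner_sub_right]

theorem lp.inner_eq_inner_zero_add_tsum_succ {𝕜 : Type*} [RCLike 𝕜] {G : ℕ → Type*}
    [∀ n, NormedAddCommGroup (G n)] [∀ n, InnerProductSpace 𝕜 (G n)] (f g : lp G 2) :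
    inner 𝕜 f g = inner 𝕜 (f 0) (g 0) + ∑' n, inner 𝕜 (f (n + 1)) (g (n + 1)) := by
  rw [lp.inner_eq_tsum, (lp.summable_inner (𝕜 := 𝕜) f g).tsum_eq_zero_add]

theorem inner_fundamentalSymmetry_eq {𝕜 E : Type*} [RCLike 𝕜] [NormedAddCommGroup E]
    [InnerProductSpace 𝕜 E] {J : E → E} {Jhat : lp (fun _ : ℕ => E) 2 → lp (fun _ : ℕ => E) 2}
    (hJhat0 : ∀ f, (Jhat f) 0 = J (f 0)) (hJhatn : ∀ f (n : ℕ), n ≠ 0 → (Jhat f) n = -(f n))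
    (f : lp (fun _ : ℕ => E) 2) :
    inner 𝕜 f (Jhat f) = inner 𝕜 (f 0) (J (f 0)) - ∑' n, inner 𝕜 (f (n + 1)) (f (n + 1)) := by
  rw [lp.inner_eq_inner_zero_add_tsum_succ, hJhat0, sub_eq_add_neg, ← tsum_neg]
  congr 1
  exact tsum_congr fun n => by rw [hJhatn f (n + 1) n.succ_ne_zero, inner_neg_right]

theorem dilation_is_isometry_general {H : Type*} [NormedAddCommGroup H]
    [InnerProductSpace ℂ H] [CompleteSpace H]
    (J T : H →L[ℂ] H)
    (D : H →L[ℂ] H) (hD : D.IsPositive)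
    (hDsq : D ∘L D = ContinuousLinearMap.adjoint T ∘L J ∘L T - J)
    (Jhat : lp (fun _ : ℕ => H) 2 →L[ℂ] lp (fun _ : ℕ => H) 2)
    (hJhat0 : ∀ f : lp (fun _ : ℕ => H) 2, (Jhat f) 0 = J (f 0))
    (hJhatn : ∀ (f : lp (fun _ : ℕ => H) 2) (n : ℕ), n ≠ 0 → (Jhat f) n = -(f n))
    (p : lp (fun _ : ℕ => H) 2 →L[ℂ] H)
    (hp : ∀ f : lp (fun _ : ℕ => H) 2, p f = f 0)
    (V : lp (fun _ : ℕ => H) 2 →L[ℂ] lp (fun _ : ℕ => H) 2)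
    (hV0 : ∀ f : lp (fun _ : ℕ => H) 2, (V f) 0 = T (f 0))
    (hV1 : ∀ f : lp (fun _ : ℕ => H) 2, (V f) 1 = D (f 0))
    (hVn : ∀ (f : lp (fun _ : ℕ => H) 2) (n : ℕ), (V f) (n + 2) = f (n + 1)) :
    (∀ f : lp (fun _ : ℕ => H) 2,
        (inner ℂ (V f) (Jhat (V f)) : ℂ) = inner ℂ f (Jhat f)) ∧
    (∀ f : lp (fun _ : ℕ => H) 2, T (p f) = p (V f)) := by
  refine ⟨fun f => ?_, fun f => by rw [hp, hp, hV0]⟩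
  have hVtail : ∑' n, inner ℂ ((V f) (n + 1)) ((V f) (n + 1))
      = inner ℂ (D (f 0)) (D (f 0)) + ∑' n, inner ℂ (f (n + 1)) (f (n + 1)) := by
    have hsum := (summable_nat_add_iff 1).2 (lp.summable_inner (𝕜 := ℂ) (V f) (V f))
    rw [hsum.tsum_eq_zero_add, hV1]
    simp only [hVn]
  rw [inner_fundamentalSymmetry_eq hJhat0 hJhatn, inner_fundamentalSymmetry_eq hJhat0 hJhatn,
    hVtail, hV0, ← inner_apply_sub_inner_defect_eq hD.isSelfAdjoint hDsq (f 0)]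
  ring

/-- for a J-noncontraction `T` with `D = (T*JT - J)^{1/2}` (the positive
square root), the operator `V(x₁ ⊕ x₂ ⊕ ⋯) = Tx₁ ⊕ Dx₁ ⊕ x₂ ⊕ ⋯` on
`Ĥ = ⨁_{n≥1} H` is a bounded Ĵ-isometry, and `T ∘ p = p ∘ V`. -/
theorem dilation_is_isometry {H : Type*} [NormedAddCommGroup H]
    [InnerProductSpace ℂ H] [CompleteSpace H]
    (J T : H →L[ℂ] H) (hJ : IsSelfAdjoint J) (hJ2 : J ∘L J = 1)
    (hT : (ContinuousLinearMap.adjoint T ∘L J ∘L T - J).IsPositive)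
    (D : H →L[ℂ] H) (hD : D.IsPositive)
    (hDsq : D ∘L D = ContinuousLinearMap.adjoint T ∘L J ∘L T - J)
    (Jhat : lp (fun _ : ℕ => H) 2 →L[ℂ] lp (fun _ : ℕ => H) 2)
    (hJhat0 : ∀ f : lp (fun _ : ℕ => H) 2, (Jhat f) 0 = J (f 0))
    (hJhatn : ∀ (f : lp (fun _ : ℕ => H) 2) (n : ℕ), n ≠ 0 → (Jhat f) n = -(f n))
    (p : lp (fun _ : ℕ => H) 2 →L[ℂ] H)
    (hp : ∀ f : lp (fun _ : ℕ => H) 2, p f = f 0)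
    (V : lp (fun _ : ℕ => H) 2 →L[ℂ] lp (fun _ : ℕ => H) 2)
    (hV0 : ∀ f : lp (fun _ : ℕ => H) 2, (V f) 0 = T (f 0))
    (hV1 : ∀ f : lp (fun _ : ℕ => H) 2, (V f) 1 = D (f 0))
    (hVn : ∀ (f : lp (fun _ : ℕ => H) 2) (n : ℕ), (V f) (n + 2) = f (n + 1)) :
    (∀ f : lp (fun _ : ℕ => H) 2,
        (inner ℂ (V f) (Jhat (V f)) : ℂ) = inner ℂ f (Jhat f)) ∧
    (∀ f : lp (fun _ : ℕ => H) 2, T (p f) = p (V f)) :=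
  dilation_is_isometry_general J T D hD hDsq Jhat hJhat0 hJhatn p hp V hV0 hV1 hVn
end

section
/- (Theorem 1, maximal version) Suppose that for every Krein space every J-isometry has a maximal positive invariant subspace. Then for every Krein space every J-noncontraction has a maximal positive invariant subspace. -/
/-!
If `T` is a `J`-noncontraction, the defect operator `T†JT - J` is positive, hence equal to `D†D`,
so `‖D x‖² = [T x, T x] - [x, x]`. On `E ⊕ ℓ²(E)` with fundamental symmetry `J ⊕ (-1)`, the
operator `(x, f) ↦ (T x, (D x, f₀, f₁, …))` is then a `J`-isometry lying over `T`, so the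
projection to `E` of one of its maximal positive invariant subspaces is positive and
`T`-invariant. It is also maximal: a positive subspace `L` is maximal exactly when
`P₊ = (1 + J) / 2` maps it onto the fixed space of `J` (`P₊` is bounded below on `L`, so `P₊ L`
is closed, and a fixed vector orthogonal to `P₊ L` is orthogonal to `L` and could be adjoined
to it), and this criterion passes to the projection because the fixed space of `J ⊕ (-1)` is
that of `J` times `0`.
-/

noncomputable section

namespace Krein

section Projections

variable {E : Type*} [NormedAddCommGroup E] [InnerProductSpace ℂ E]

def posProj (J : E →L[ℂ] E) : E →L[ℂ] E := (2⁻¹ : ℂ) • (1 + J)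

def negProj (J : E →L[ℂ] E) : E →L[ℂ] E := (2⁻¹ : ℂ) • (1 - J)

variable {J : E →L[ℂ] E}

theorem posProj_add_negProj (J : E →L[ℂ] E) (x : E) : posProj J x + negProj J x = x := by
  simp only [posProj, negProj, smul_apply, add_apply, sub_apply, one_apply_eq_self]
  module

theorem posProj_sub_negProj (J : E →L[ℂ] E) (x : E) : posProj J x - negProj J x = J x := by
  simp only [posProj, negProj, smul_apply, add_apply, sub_apply, one_apply_eq_self]
  module

theorem apply_apply_of_comp_self (hJ2 : J ∘L J = 1) (x : E) : J (J x) = x :=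
  DFunLike.congr_fun hJ2 x

theorem apply_posProj (hJ2 : J ∘L J = 1) (x : E) : J (posProj J x) = posProj J x := by
  simp only [posProj, smul_apply, add_apply, one_apply_eq_self, map_smul, map_add,
    apply_apply_of_comp_self hJ2]
  module

theorem apply_negProj (hJ2 : J ∘L J = 1) (x : E) : J (negProj J x) = -negProj J x := by
  simp only [negProj, smul_apply, sub_apply, one_apply_eq_self, map_smul, map_sub,
    apply_apply_of_comp_self hJ2]
  module

theorem posProj_apply_of_apply_eq_self {x : E} (hx : J x = x) : posProj J x = x := by
  simp only [posProj, smul_apply, add_apply, one_apply_eq_self, hx]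
  module

variable [CompleteSpace E]

theorem inner_posProj_negProj (hJ : IsSelfAdjoint J) (hJ2 : J ∘L J = 1) (x y : E) :
    inner ℂ (posProj J x) (negProj J y) = 0 := by
  have h := hJ.isSymmetric (posProj J x) (negProj J y)
  simp only [ContinuousLinearMap.coe_coe, apply_posProj hJ2, apply_negProj hJ2,
    inner_neg_right] at h
  linear_combination h / 2

theorem re_inner_apply_self (hJ : IsSelfAdjoint J) (hJ2 : J ∘L J = 1) (x : E) :
    (inner ℂ x (J x)).re = ‖posProj J x‖ ^ 2 - ‖negProj J x‖ ^ 2 := by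
  have h₁ := inner_posProj_negProj hJ hJ2 x x
  have h₂ : inner ℂ (negProj J x) (posProj J x) = 0 := by
    rw [← inner_conj_symm, h₁, map_zero]
  calc (inner ℂ x (J x)).re
      = (inner ℂ (posProj J x + negProj J x) (posProj J x - negProj J x)).re := by
        rw [posProj_sub_negProj, posProj_add_negProj]
    _ = ‖posProj J x‖ ^ 2 - ‖negProj J x‖ ^ 2 := by
        simp only [inner_add_left, inner_sub_right, h₁, h₂, inner_self_eq_norm_sq_to_K]
        simp [← Complex.ofReal_pow]

theorem norm_negProj_le_norm_posProj (hJ : IsSelfAdjoint J) (hJ2 : J ∘L J = 1) {x : E}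
    (hx : 0 ≤ (inner ℂ x (J x)).re) : ‖negProj J x‖ ≤ ‖posProj J x‖ := by
  rw [re_inner_apply_self hJ hJ2] at hx
  exact (pow_le_pow_iff_left₀ (norm_nonneg _) (norm_nonneg _) two_ne_zero).mp (by linarith)

theorem norm_le_two_mul_norm_posProj (hJ : IsSelfAdjoint J) (hJ2 : J ∘L J = 1) {x : E}
    (hx : 0 ≤ (inner ℂ x (J x)).re) : ‖x‖ ≤ 2 * ‖posProj J x‖ :=
  calc ‖x‖ = ‖posProj J x + negProj J x‖ := by rw [posProj_add_negProj]
    _ ≤ ‖posProj J x‖ + ‖negProj J x‖ := norm_add_le _ _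
    _ ≤ 2 * ‖posProj J x‖ := by linarith [norm_negProj_le_norm_posProj hJ hJ2 hx]

end Projections

section Subspaces

variable {E : Type*} [NormedAddCommGroup E] [InnerProductSpace ℂ E]

def IsPositiveSubspace (J : E →L[ℂ] E) (L : Submodule ℂ E) : Prop :=
  ∀ x ∈ L, 0 ≤ (inner ℂ x (J x)).re

def IsMaximalPositiveSubspace (J : E →L[ℂ] E) (L : Submodule ℂ E) : Prop :=
  IsPositiveSubspace J L ∧ ∀ M : Submodule ℂ E, IsPositiveSubspace J M → L ≤ M → M = L

variable {J : E →L[ℂ] E} {L : Submodule ℂ E}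

theorem IsPositiveSubspace.topologicalClosure (hL : IsPositiveSubspace J L) :
    IsPositiveSubspace J L.topologicalClosure := by
  have hclosed : IsClosed {x : E | 0 ≤ (inner ℂ x (J x)).re} :=
    isClosed_le continuous_const (Complex.continuous_re.comp (continuous_id.inner J.continuous))
  intro x hx
  rw [← SetLike.mem_coe, Submodule.topologicalClosure_coe] at hx
  exact closure_minimal hL hclosed hx

theorem IsMaximalPositiveSubspace.isClosed (hL : IsMaximalPositiveSubspace J L) :
    IsClosed (L : Set E) := by
  have h := hL.2 _ hL.1.topologicalClosure L.le_topologicalClosure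
  rw [← h]
  exact L.isClosed_topologicalClosure

theorem IsPositiveSubspace.sup_span_singleton [CompleteSpace E] (hJ : IsSelfAdjoint J)
    (hL : IsPositiveSubspace J L) {d : E} (hJd : J d = d) (hd : ∀ x ∈ L, inner ℂ x d = 0) :
    IsPositiveSubspace J (L ⊔ Submodule.span ℂ {d}) := by
  intro y hy
  obtain ⟨x, hx, _, hz, rfl⟩ := Submodule.mem_sup.mp hy
  obtain ⟨a, rfl⟩ := Submodule.mem_span_singleton.mp hz
  have hdx : inner ℂ (a • d) (J x) = 0 := by
    have hsymm : inner ℂ (J (a • d)) x = inner ℂ (a • d) (J x) := hJ.isSymmetric _ _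
    rw [← hsymm, map_smul, hJd, inner_smul_left,
      ← inner_conj_symm, hd x hx, map_zero, mul_zero]
  have hxd : inner ℂ x (J (a • d)) = 0 := by
    rw [map_smul, hJd, inner_smul_right, hd x hx, mul_zero]
  have hdd : (inner ℂ (a • d) (J (a • d))).re = ‖a • d‖ ^ 2 := by
    rw [map_smul, hJd, ← inner_self_eq_norm_sq (𝕜 := ℂ)]
    rfl
  rw [map_add, inner_add_left, inner_add_right, inner_add_right, hdx, hxd, add_zero, zero_add,
    Complex.add_re, hdd]
  exact add_nonneg (hL x hx) (sq_nonneg _)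

variable [CompleteSpace E]

theorem IsPositiveSubspace.isMaximal_of_forall_exists_posProj_eq (hJ : IsSelfAdjoint J)
    (hJ2 : J ∘L J = 1) (hL : IsPositiveSubspace J L)
    (hsurj : ∀ u, J u = u → ∃ x ∈ L, posProj J x = u) : IsMaximalPositiveSubspace J L := by
  refine ⟨hL, fun M hM hLM => le_antisymm (fun m hm => ?_) hLM⟩
  obtain ⟨x, hxL, hx⟩ := hsurj (posProj J m) (apply_posProj hJ2 m)
  have hmx : m - x ∈ M := sub_mem hm (hLM hxL)
  have hpos : posProj J (m - x) = 0 := by rw [map_sub, hx, sub_self]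
  have hnorm := norm_le_two_mul_norm_posProj hJ hJ2 (hM _ hmx)
  rw [hpos, norm_zero, mul_zero, norm_le_zero_iff, sub_eq_zero] at hnorm
  exact hnorm ▸ hxL

theorem IsPositiveSubspace.isClosed_map_posProj (hJ : IsSelfAdjoint J) (hJ2 : J ∘L J = 1)
    (hL : IsPositiveSubspace J L) (hLc : IsClosed (L : Set E)) :
    IsClosed (L.map (posProj J : E →ₗ[ℂ] E) : Set E) := by
  have : CompleteSpace L := hLc.completeSpace_coe
  rw [Submodule.map_coe, Set.image_eq_range]
  exact ((posProj J ∘L L.subtypeL).antilipschitz_of_bound (K := 2)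
    fun x => norm_le_two_mul_norm_posProj hJ hJ2 (hL x x.2)).isClosed_range
    (posProj J ∘L L.subtypeL).uniformContinuous

theorem IsMaximalPositiveSubspace.exists_posProj_eq (hJ : IsSelfAdjoint J) (hJ2 : J ∘L J = 1)
    (hL : IsMaximalPositiveSubspace J L) {u : E} (hu : J u = u) :
    ∃ x ∈ L, posProj J x = u := by
  set S := L.map (posProj J : E →ₗ[ℂ] E)
  have : CompleteSpace S := (hL.1.isClosed_map_posProj hJ hJ2 hL.isClosed).completeSpace_coe
  have hJS : ∀ s ∈ S, J s = s := by
    rintro _ ⟨x, -, rfl⟩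
    exact apply_posProj hJ2 x
  set d := u - S.starProjection u
  have hdS : d ∈ Sᗮ := S.sub_starProjection_mem_orthogonal u
  have hJd : J d = d := by
    rw [map_sub, hu, hJS _ (S.starProjection_apply_mem u)]
  have hd : ∀ x ∈ L, inner ℂ x d = 0 := by
    intro x hx
    have hpos : inner ℂ (posProj J x) d = 0 :=
      Submodule.inner_right_of_mem_orthogonal (Submodule.mem_map_of_mem hx) hdS
    have hneg : inner ℂ (negProj J x) d = 0 := by
      rw [← posProj_apply_of_apply_eq_self hJd, ← inner_conj_symm,
        inner_posProj_negProj hJ hJ2, map_zero]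
    rw [← posProj_add_negProj J x, inner_add_left, hpos, hneg, add_zero]
  have hdL : d ∈ L := by
    rw [← hL.2 _ (hL.1.sup_span_singleton hJ hJd hd) le_sup_left]
    exact Submodule.mem_sup_right (Submodule.mem_span_singleton_self d)
  have hu_eq : u = S.starProjection u := sub_eq_zero.mp (inner_self_eq_zero.mp (hd d hdL))
  rw [hu_eq]
  exact Submodule.mem_map.mp (S.starProjection_apply_mem u)

end Subspaces

section Shift

variable {E : Type*}

def natCons (a : E) (f : ℕ → E) : ℕ → E
  | 0 => a
  | n + 1 => f n

theorem memℓp_natCons [NormedAddCommGroup E] (a : E) (f : lp (fun _ : ℕ => E) 2) :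
    Memℓp (natCons a f) 2 := by
  have hp : 0 < (2 : ENNReal).toReal := by norm_num
  exact memℓp_gen ((summable_nat_add_iff 1).mp ((lp.memℓp f).summable hp))

variable [NormedAddCommGroup E] [InnerProductSpace ℂ E]

def lpConsₗ : WithLp 2 (E × lp (fun _ : ℕ => E) 2) →ₗ[ℂ] lp (fun _ : ℕ => E) 2 where
  toFun z := ⟨natCons z.fst z.snd, memℓp_natCons z.fst z.snd⟩
  map_add' z w := lp.ext <| funext fun n => by cases n <;> rfl
  map_smul' c z := lp.ext <| funext fun n => by cases n <;> rfl

theorem inner_lpConsₗ (z w : WithLp 2 (E × lp (fun _ : ℕ => E) 2)) :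
    inner ℂ (lpConsₗ z) (lpConsₗ w) = inner ℂ z w := by
  have h : HasSum (fun n => inner ℂ (natCons z.fst z.snd n) (natCons w.fst w.snd n))
      (inner ℂ z.fst w.fst + inner ℂ z.snd w.snd) :=
    (lp.hasSum_inner z.snd w.snd).zero_add
  rw [WithLp.prod_inner_apply]
  exact (lp.hasSum_inner (lpConsₗ z) (lpConsₗ w)).unique h

def lpConsₗᵢ : WithLp 2 (E × lp (fun _ : ℕ => E) 2) →ₗᵢ[ℂ] lp (fun _ : ℕ => E) 2 :=
  lpConsₗ.isometryOfInner inner_lpConsₗ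

end Shift

section Product

variable {E F X : Type*} [NormedAddCommGroup E] [InnerProductSpace ℂ E]
  [NormedAddCommGroup F] [InnerProductSpace ℂ F] [NormedAddCommGroup X] [NormedSpace ℂ X]

def toLpProdL (A : X →L[ℂ] E) (B : X →L[ℂ] F) : X →L[ℂ] WithLp 2 (E × F) :=
  (WithLp.prodContinuousLinearEquiv 2 ℂ E F).symm.toContinuousLinearMap ∘L A.prod B

@[simp]
theorem toLpProdL_apply_fst (A : X →L[ℂ] E) (B : X →L[ℂ] F) (x : X) :
    (toLpProdL A B x).fst = A x := rfl

variable (F) in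
def prodNeg (J : E →L[ℂ] E) : WithLp 2 (E × F) →L[ℂ] WithLp 2 (E × F) :=
  toLpProdL (J ∘L WithLp.fstL 2 ℂ E F) (-WithLp.sndL 2 ℂ E F)

variable {J : E →L[ℂ] E}

@[simp]
theorem prodNeg_apply_fst (z : WithLp 2 (E × F)) : (prodNeg F J z).fst = J z.fst := rfl

@[simp]
theorem prodNeg_apply_snd (z : WithLp 2 (E × F)) : (prodNeg F J z).snd = -z.snd := rfl

theorem inner_prodNeg (z w : WithLp 2 (E × F)) :
    inner ℂ z (prodNeg F J w) = inner ℂ z.fst (J w.fst) - inner ℂ z.snd w.snd := by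
  rw [WithLp.prod_inner_apply, WithLp.ofLp_fst, WithLp.ofLp_snd, WithLp.ofLp_fst,
    WithLp.ofLp_snd, prodNeg_apply_fst, prodNeg_apply_snd, inner_neg_right, sub_eq_add_neg]

theorem prodNeg_comp_self (hJ2 : J ∘L J = 1) : prodNeg F J ∘L prodNeg F J = 1 := by
  ext z : 1
  refine (WithLp.ext_iff 2).mpr (Prod.ext ?_ ?_)
  · exact apply_apply_of_comp_self hJ2 z.fst
  · exact neg_neg z.snd

theorem isSelfAdjoint_prodNeg [CompleteSpace E] [CompleteSpace F] (hJ : IsSelfAdjoint J) :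
    IsSelfAdjoint (prodNeg F J) := by
  rw [ContinuousLinearMap.isSelfAdjoint_iff_isSymmetric]
  intro z w
  have hsymm : inner ℂ (J z.fst) w.fst = inner ℂ z.fst (J w.fst) := hJ.isSymmetric _ _
  simp only [ContinuousLinearMap.coe_coe, WithLp.prod_inner_apply, WithLp.ofLp_fst,
    WithLp.ofLp_snd, prodNeg_apply_fst, prodNeg_apply_snd, inner_neg_left, inner_neg_right, hsymm]

theorem posProj_prodNeg_apply_fst (z : WithLp 2 (E × F)) :
    (posProj (prodNeg F J) z).fst = posProj J z.fst := rfl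

theorem IsMaximalPositiveSubspace.map_fst [CompleteSpace E] [CompleteSpace F]
    (hJ : IsSelfAdjoint J) (hJ2 : J ∘L J = 1) {L : Submodule ℂ (WithLp 2 (E × F))}
    (hL : IsMaximalPositiveSubspace (prodNeg F J) L) :
    IsMaximalPositiveSubspace J (L.map (WithLp.fstₗ 2 ℂ E F)) := by
  have hpos : IsPositiveSubspace J (L.map (WithLp.fstₗ 2 ℂ E F)) := by
    rintro _ ⟨z, hz, rfl⟩
    have h := hL.1 z hz
    rw [inner_prodNeg, Complex.sub_re] at h
    exact le_trans (inner_self_nonneg (𝕜 := ℂ)) (sub_nonneg.mp h)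
  refine hpos.isMaximal_of_forall_exists_posProj_eq hJ hJ2 fun u hu => ?_
  obtain ⟨z, hz, hzu⟩ := hL.exists_posProj_eq (isSelfAdjoint_prodNeg hJ) (prodNeg_comp_self hJ2)
    (u := WithLp.toLp 2 (u, 0)) ((WithLp.ext_iff 2).mpr (Prod.ext hu neg_zero))
  exact ⟨z.fst, Submodule.mem_map_of_mem hz, by rw [← posProj_prodNeg_apply_fst, hzu]; rfl⟩

end Product

section Dilation

variable {E : Type*} [NormedAddCommGroup E] [InnerProductSpace ℂ E]

def dilation (T D : E →L[ℂ] E) :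
    WithLp 2 (E × lp (fun _ : ℕ => E) 2) →L[ℂ] WithLp 2 (E × lp (fun _ : ℕ => E) 2) :=
  toLpProdL (T ∘L WithLp.fstL 2 ℂ _ _)
    (lpConsₗᵢ.toContinuousLinearMap ∘L
      toLpProdL (D ∘L WithLp.fstL 2 ℂ _ _) (WithLp.sndL 2 ℂ _ _))

theorem inner_dilation_prodNeg {J T D : E →L[ℂ] E}
    (hD : ∀ x, inner ℂ (D x) (D x) = inner ℂ (T x) (J (T x)) - inner ℂ x (J x))
    (z : WithLp 2 (E × lp (fun _ : ℕ => E) 2)) :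
    inner ℂ (dilation T D z) (prodNeg _ J (dilation T D z)) = inner ℂ z (prodNeg _ J z) := by
  have hcons : inner ℂ (dilation T D z).snd (dilation T D z).snd
      = inner ℂ (D z.fst) (D z.fst) + inner ℂ z.snd z.snd :=
    lpConsₗᵢ.inner_map_map (WithLp.toLp 2 (D z.fst, z.snd)) (WithLp.toLp 2 (D z.fst, z.snd))
  rw [inner_prodNeg, inner_prodNeg, hcons, hD]
  simp only [dilation, toLpProdL_apply_fst, ContinuousLinearMap.comp_apply, WithLp.fstL_apply]
  ring

theorem exists_inner_self_eq_of_isPositive [CompleteSpace E] {Q : E →L[ℂ] E}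
    (hQ : Q.IsPositive) : ∃ D : E →L[ℂ] E, ∀ x, inner ℂ (D x) (D x) = inner ℂ x (Q x) := by
  obtain ⟨D, rfl⟩ :=
    CStarAlgebra.nonneg_iff_eq_star_mul_self.mp ((Q.nonneg_iff_isPositive).mpr hQ)
  exact ⟨D, fun x => by
    rw [← ContinuousLinearMap.adjoint_inner_right, ContinuousLinearMap.star_eq_adjoint]; rfl⟩

theorem exists_defect [CompleteSpace E] {J T : E →L[ℂ] E} (hJ : IsSelfAdjoint J)
    (hT : ∀ x, (inner ℂ x (J x)).re ≤ (inner ℂ (T x) (J (T x))).re) :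
    ∃ D : E →L[ℂ] E, ∀ x, inner ℂ (D x) (D x) = inner ℂ (T x) (J (T x)) - inner ℂ x (J x) := by
  set Q := ContinuousLinearMap.adjoint T ∘L J ∘L T - J
  have hQ : ∀ x, inner ℂ x (Q x) = inner ℂ (T x) (J (T x)) - inner ℂ x (J x) := fun x => by
    simp only [Q, sub_apply, ContinuousLinearMap.comp_apply, inner_sub_right,
      ContinuousLinearMap.adjoint_inner_right]
  have hQpos : Q.IsPositive := by
    refine ⟨((hJ.adjoint_conj T).sub hJ).isSymmetric, fun x => ?_⟩
    rw [Q.reApplyInnerSelf_apply, inner_re_symm, hQ, map_sub, sub_nonneg]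
    exact hT x
  obtain ⟨D, hD⟩ := exists_inner_self_eq_of_isPositive hQpos
  exact ⟨D, fun x => (hD x).trans (hQ x)⟩

end Dilation

end Krein

end

/-- Theorem 1, maximal version: if in every Krein space every J-isometry
has a maximal positive invariant subspace, then in every Krein space every
J-noncontraction has a maximal positive invariant subspace. -/
theorem isometry_maximal_invariant_implies_noncontraction_maximal_invariant
    (hyp : ∀ (E : Type) [NormedAddCommGroup E] [InnerProductSpace ℂ E] [CompleteSpace E]
      (J V : E →L[ℂ] E), IsSelfAdjoint J → J ∘L J = 1 →
      (∀ x : E, (inner ℂ (V x) (J (V x)) : ℂ) = inner ℂ x (J x)) →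
      ∃ L : Submodule ℂ E, (∀ x ∈ L, 0 ≤ (inner ℂ x (J x) : ℂ).re) ∧
        (∀ M : Submodule ℂ E, (∀ x ∈ M, 0 ≤ (inner ℂ x (J x) : ℂ).re) → L ≤ M → M = L) ∧
        ∀ x ∈ L, V x ∈ L) :
    ∀ (E : Type) [NormedAddCommGroup E] [InnerProductSpace ℂ E] [CompleteSpace E]
      (J T : E →L[ℂ] E), IsSelfAdjoint J → J ∘L J = 1 →
      (∀ x : E, (inner ℂ x (J x) : ℂ).re ≤ (inner ℂ (T x) (J (T x)) : ℂ).re) →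
      ∃ L : Submodule ℂ E, (∀ x ∈ L, 0 ≤ (inner ℂ x (J x) : ℂ).re) ∧
        (∀ M : Submodule ℂ E, (∀ x ∈ M, 0 ≤ (inner ℂ x (J x) : ℂ).re) → L ≤ M → M = L) ∧
        ∀ x ∈ L, T x ∈ L := by
  intro E _ _ _ J T hJ hJ2 hT
  obtain ⟨D, hD⟩ := Krein.exists_defect hJ hT
  obtain ⟨L, hLpos, hLmax, hLinv⟩ := hyp _ _ (Krein.dilation T D)
    (Krein.isSelfAdjoint_prodNeg hJ) (Krein.prodNeg_comp_self hJ2)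
    (Krein.inner_dilation_prodNeg hD)
  obtain ⟨hpos, hmax⟩ := Krein.IsMaximalPositiveSubspace.map_fst hJ hJ2 ⟨hLpos, hLmax⟩
  refine ⟨_, hpos, hmax, ?_⟩
  rintro _ ⟨z, hz, rfl⟩
  exact Submodule.mem_map_of_mem (hLinv z hz)
end

section
/- Let V be a J-isometry, write the positive part of the selfadjoint operator J − VJV* via spectral calculus: p₊ := the spectral projection of J − VJV* onto (0,∞), and A := ((J − VJV*)₊)^{1/2}. Then A and p₊ are selfadjoint, A ≥ 0, p₊ is the orthogonal projection onto closure(Ran A), A = A p₊ = p₊ A, and Ran p₊ ⊆ Ker(V*J). Moreover A J A = p₊ and V*J A = 0. -/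
/-!
Write `S = J - VJV*`. The relation `V*JV = J` gives `V*JS = 0`, hence `SJS = S`. Because
`S₊(S₊ - S) = 0` and `ker p₊ = ker S₊`, also `p₊(S₊ - S) = 0`, so `S₊ = p₊S = Sp₊`; therefore
`S₊JS₊ = p₊(SJS)p₊ = S₊` and `V*JS₊ = V*JSp₊ = 0`. With `S₊ = A²` the first identity reads
`A(AJA)A = Ap₊A`. Since `ker A = ker S₊ = ker p₊` and `Ran A` is dense in `Ran p₊`, `A` can be
cancelled on both sides after compressing by `p₊`, which gives `AJA = p₊`.
-/

open ContinuousLinearMap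

section IsometryDefect

variable {R : Type*} [Ring R] [Star R]

def isometryDefect (J V : R) : R := J - V * J * star V

variable {J V : R}

lemma star_mul_mul_isometryDefect (hJ : J * J = 1) (hV : star V * J * V = J) :
    star V * J * isometryDefect J V = 0 := by
  calc star V * J * isometryDefect J V = star V * (J * J) - star V * J * V * J * star V := by
        rw [isometryDefect]; noncomm_ring
    _ = 0 := by rw [hV, hJ, mul_one, one_mul, sub_self]

lemma isometryDefect_mul_mul_self (hJ : J * J = 1) (hV : star V * J * V = J) :
    isometryDefect J V * J * isometryDefect J V = isometryDefect J V := by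
  calc isometryDefect J V * J * isometryDefect J V
        = J * J * isometryDefect J V - V * J * (star V * J * isometryDefect J V) := by
        nth_rw 1 [isometryDefect]; noncomm_ring
    _ = isometryDefect J V := by rw [star_mul_mul_isometryDefect hJ hV, hJ, one_mul, mul_zero,
        sub_zero]

end IsometryDefect

lemma IsIdempotentElem.comp_eq_self_of_range_le {R M : Type*} [Semiring R] [TopologicalSpace M]
    [AddCommMonoid M] [Module R M] {T p : M →L[R] M} (hp : IsIdempotentElem p)
    (h : T.range ≤ p.range) : p ∘L T = T := by
  ext x
  obtain ⟨y, hy : p y = T x⟩ := h ⟨x, rfl⟩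
  rw [comp_apply, ← hy]
  exact DFunLike.congr_fun hp.eq y

section SelfAdjoint

variable {𝕜 E F : Type*} [RCLike 𝕜] [NormedAddCommGroup E] [InnerProductSpace 𝕜 E]
  [CompleteSpace E] {T p : E →L[𝕜] E}

lemma IsSelfAdjoint.orthogonal_range (hT : IsSelfAdjoint T) : T.rangeᗮ = T.ker := by
  rw [ContinuousLinearMap.orthogonal_range, hT.adjoint_eq]

lemma IsSelfAdjoint.orthogonal_ker (hT : IsSelfAdjoint T) :
    T.kerᗮ = T.range.topologicalClosure := by
  rw [ContinuousLinearMap.orthogonal_ker, hT.adjoint_eq]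

lemma IsSelfAdjoint.closure_range_mul_self (hT : IsSelfAdjoint T) :
    (T * T).range.topologicalClosure = T.range.topologicalClosure := by
  calc (T * T).range.topologicalClosure
        = (adjoint (adjoint T ∘L T)).range.topologicalClosure := by
        rw [adjoint_comp, adjoint_adjoint, hT.adjoint_eq]; rfl
    _ = T.kerᗮ := by rw [← ContinuousLinearMap.orthogonal_ker, ker_adjoint_comp_self]
    _ = T.range.topologicalClosure := hT.orthogonal_ker

lemma IsSelfAdjoint.comp_eq_self_of_range_le (hT : IsSelfAdjoint T) (hp : IsSelfAdjoint p)
    (hp_idem : IsIdempotentElem p) (h : T.range ≤ p.range) : T ∘L p = T := by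
  simpa [hT.adjoint_eq, hp.adjoint_eq] using congrArg adjoint (hp_idem.comp_eq_self_of_range_le h)

lemma ker_eq_ker_of_range_eq_closure_range (hT : IsSelfAdjoint T) (hp : IsSelfAdjoint p)
    (hpT : p.range = T.range.topologicalClosure) : p.ker = T.ker := by
  rw [← hp.orthogonal_range, hpT, Submodule.orthogonal_closure, hT.orthogonal_range]

lemma proj_comp_eq_zero [TopologicalSpace F] [AddCommGroup F] [Module 𝕜 F]
    (hT : IsSelfAdjoint T) (hp : IsSelfAdjoint p) (hpT : p.range = T.range.topologicalClosure)
    {X : F →L[𝕜] E} (h : T ∘L X = 0) : p ∘L X = 0 := by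
  have hX : X.range ≤ T.ker :=
    LinearMap.range_le_ker_iff.mpr (by rw [← toLinearMap_comp, h, toLinearMap_zero])
  rwa [← ker_eq_ker_of_range_eq_closure_range hT hp hpT, LinearMap.range_le_ker_iff,
    ← toLinearMap_comp, ← toLinearMap_zero, coe_inj] at hX

lemma comp_proj_eq_zero [NormedAddCommGroup F] [InnerProductSpace 𝕜 F] [CompleteSpace F]
    (hT : IsSelfAdjoint T) (hp : IsSelfAdjoint p) (hpT : p.range = T.range.topologicalClosure)
    {X : E →L[𝕜] F} (h : X ∘L T = 0) : X ∘L p = 0 := by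
  have := proj_comp_eq_zero hT hp hpT (X := adjoint X)
    (by rw [← hT.adjoint_eq, ← adjoint_comp, h, map_zero])
  rw [← adjoint_adjoint (X ∘L p), adjoint_comp, hp.adjoint_eq, this, map_zero]

lemma proj_mul_mul_proj_eq_zero (hT : IsSelfAdjoint T) (hp : IsSelfAdjoint p)
    (hpT : p.range = T.range.topologicalClosure) {X : E →L[𝕜] E} (h : T * X * T = 0) :
    p * X * p = 0 :=
  comp_proj_eq_zero hT hp hpT
    (proj_comp_eq_zero hT hp hpT (X := X * T) (by rw [← h, mul_assoc]; rfl))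

lemma proj_mul_eq_of_mul_sub_eq_zero (hT : IsSelfAdjoint T) (hp : IsSelfAdjoint p)
    (hpT : p.range = T.range.topologicalClosure) (hp_idem : IsIdempotentElem p) {S : E →L[𝕜] E}
    (h : T * (T - S) = 0) : p * S = T := by
  have : p * (T - S) = 0 := proj_comp_eq_zero hT hp hpT h
  rwa [mul_sub, show p * T = T from hp_idem.comp_eq_self_of_range_le
    (hpT ▸ Submodule.le_topologicalClosure _), sub_eq_zero, eq_comm] at this

lemma mul_mul_eq_proj_of_mul_self_mul_mul_self (hT : IsSelfAdjoint T) (hp : IsSelfAdjoint p)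
    (hpT : p.range = T.range.topologicalClosure) (hp_idem : IsIdempotentElem p) {X : E →L[𝕜] E}
    (h : T * T * X * (T * T) = T * T) : T * X * T = p := by
  have hT_le : T.range ≤ p.range := hpT ▸ Submodule.le_topologicalClosure _
  have hpT' : p * T = T := hp_idem.comp_eq_self_of_range_le hT_le
  have hTp : T * p = T := hT.comp_eq_self_of_range_le hp hp_idem hT_le
  have hcompress := proj_mul_mul_proj_eq_zero hT hp hpT (X := T * X * T - p)
    (by rw [show T * (T * X * T - p) * T = T * T * X * (T * T) - T * p * T by noncomm_ring, h, hTp,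
      sub_self])
  rwa [show p * (T * X * T - p) * p = p * T * X * (T * p) - p * p * p by noncomm_ring, hpT', hTp,
    hp_idem.eq, hp_idem.eq, sub_eq_zero] at hcompress

end SelfAdjoint

theorem positive_part_properties_general {H : Type*} [NormedAddCommGroup H]
    [InnerProductSpace ℂ H] [CompleteSpace H]
    (J V : H →L[ℂ] H) (hJ2 : J ∘L J = 1)
    (hV : ContinuousLinearMap.adjoint V ∘L J ∘L V = J)
    (Spos : H →L[ℂ] H) (hSpos : Spos.IsPositive)
    (hSneg : (Spos - (J - V ∘L J ∘L ContinuousLinearMap.adjoint V)).IsPositive)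
    (hSorth : Spos ∘L (Spos - (J - V ∘L J ∘L ContinuousLinearMap.adjoint V)) = 0)
    (A : H →L[ℂ] H) (hA : A.IsPositive) (hAsq : A ∘L A = Spos)
    (pp : H →L[ℂ] H) (hppsa : IsSelfAdjoint pp) (hppidem : pp ∘L pp = pp)
    (hpprange : LinearMap.range (pp : H →ₗ[ℂ] H) = (LinearMap.range (Spos : H →ₗ[ℂ] H)).topologicalClosure) :
    IsSelfAdjoint A ∧ IsSelfAdjoint pp ∧
    (∀ x : H, 0 ≤ (inner ℂ x (A x) : ℂ).re) ∧
    LinearMap.range (pp : H →ₗ[ℂ] H) = (LinearMap.range (A : H →ₗ[ℂ] H)).topologicalClosure ∧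
    A ∘L pp = A ∧ pp ∘L A = A ∧
    LinearMap.range (pp : H →ₗ[ℂ] H) ≤ LinearMap.ker ((ContinuousLinearMap.adjoint V ∘L J : H →L[ℂ] H) : H →ₗ[ℂ] H) ∧
    A ∘L J ∘L A = pp ∧
    ContinuousLinearMap.adjoint V ∘L J ∘L A = 0 := by
  simp only [← mul_def, ← star_eq_adjoint, ← mul_assoc] at hJ2 hV hSneg hSorth hAsq hppidem ⊢
  rw [show J - V * J * star V = isometryDefect J V from rfl] at hSneg hSorth
  set S := isometryDefect J V
  have hSpos_sa := hSpos.isSelfAdjoint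
  have hA_sa := hA.isSelfAdjoint
  have hpp_idem : IsIdempotentElem pp := hppidem
  have hS_sa : IsSelfAdjoint S := by simpa using hSpos_sa.sub hSneg.isSelfAdjoint
  have hppA_range : pp.range = A.range.topologicalClosure := by
    rw [hpprange, ← hAsq, hA_sa.closure_range_mul_self]
  have hA_le : A.range ≤ pp.range := hppA_range ▸ Submodule.le_topologicalClosure _
  have hppA : pp * A = A := hpp_idem.comp_eq_self_of_range_le hA_le
  have hppS : pp * S = Spos :=
    proj_mul_eq_of_mul_sub_eq_zero hSpos_sa hppsa hpprange hpp_idem hSorth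
  have hSpp : S * pp = Spos := by
    simpa [hS_sa.star_eq, hppsa.star_eq, hSpos_sa.star_eq] using congrArg star hppS
  have hVJSpos : star V * J * Spos = 0 := by
    rw [← hSpp, ← mul_assoc, star_mul_mul_isometryDefect hJ2 hV, zero_mul]
  have hVJpp : star V * J * pp = 0 := comp_proj_eq_zero hSpos_sa hppsa hpprange hVJSpos
  have hAJA : A * J * A = pp := by
    refine mul_mul_eq_proj_of_mul_self_mul_mul_self hA_sa hppsa hppA_range hpp_idem ?_
    calc A * A * J * (A * A) = pp * S * J * (S * pp) := by rw [hppS, hSpp, hAsq]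
      _ = pp * (S * J * S) * pp := by noncomm_ring
      _ = A * A := by
        rw [isometryDefect_mul_mul_self hJ2 hV, hppS, ← hSpp, mul_assoc, hppidem, hSpp, hAsq]
  refine ⟨hA_sa, hppsa, hA.re_inner_nonneg_right, hppA_range,
    hA_sa.comp_eq_self_of_range_le hppsa hpp_idem hA_le, hppA,
    LinearMap.range_le_ker_iff.mpr (by rw [← toLinearMap_comp]; exact congrArg _ hVJpp), hAJA, ?_⟩
  rw [← hppA, ← mul_assoc, hVJpp, zero_mul]

/-- let `V` be a J-isometry, `S := J - VJV*`, `Spos` the positive part of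
`S` (characterized by `Spos ≥ 0`, `Spos - S ≥ 0`, `Spos(Spos - S) = 0`), `A := Spos^{1/2}`
and `p₊` the orthogonal projection onto `closure(Ran Spos)` (the spectral projection of
`S` onto `(0,∞)`). Then `A`, `p₊` are selfadjoint, `A ≥ 0`, `p₊` is the orthogonal
projection onto `closure(Ran A)`, `A = Ap₊ = p₊A`, `Ran p₊ ⊆ Ker(V*J)`, `AJA = p₊` and
`V*JA = 0`. -/
theorem positive_part_properties {H : Type*} [NormedAddCommGroup H]
    [InnerProductSpace ℂ H] [CompleteSpace H]
    (J V : H →L[ℂ] H) (hJ : IsSelfAdjoint J) (hJ2 : J ∘L J = 1)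
    (hV : ContinuousLinearMap.adjoint V ∘L J ∘L V = J)
    (Spos : H →L[ℂ] H) (hSpos : Spos.IsPositive)
    (hSneg : (Spos - (J - V ∘L J ∘L ContinuousLinearMap.adjoint V)).IsPositive)
    (hSorth : Spos ∘L (Spos - (J - V ∘L J ∘L ContinuousLinearMap.adjoint V)) = 0)
    (A : H →L[ℂ] H) (hA : A.IsPositive) (hAsq : A ∘L A = Spos)
    (pp : H →L[ℂ] H) (hppsa : IsSelfAdjoint pp) (hppidem : pp ∘L pp = pp)
    (hpprange : LinearMap.range (pp : H →ₗ[ℂ] H) = (LinearMap.range (Spos : H →ₗ[ℂ] H)).topologicalClosure) :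
    IsSelfAdjoint A ∧ IsSelfAdjoint pp ∧
    (∀ x : H, 0 ≤ (inner ℂ x (A x) : ℂ).re) ∧
    LinearMap.range (pp : H →ₗ[ℂ] H) = (LinearMap.range (A : H →ₗ[ℂ] H)).topologicalClosure ∧
    A ∘L pp = A ∧ pp ∘L A = A ∧
    LinearMap.range (pp : H →ₗ[ℂ] H) ≤ LinearMap.ker ((ContinuousLinearMap.adjoint V ∘L J : H →L[ℂ] H) : H →ₗ[ℂ] H) ∧
    A ∘L J ∘L A = pp ∧
    ContinuousLinearMap.adjoint V ∘L J ∘L A = 0 :=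
  positive_part_properties_general J V hJ2 hV Spos hSpos hSneg hSorth A hA hAsq pp hppsa hppidem
    hpprange
end

section
/- Let V be a J-isometry on H, A := ((J − VJV*)₊)^{1/2}, p₊ the range projection of A, and B : H → H an isometry of H with final space Ran(I − p₊) (which exists since Ran(I − p₊) ⊇ closure(Ran JV), an infinite-dimensional subspace when needed). Define on Ĥ := H ⊕ H the operators Ĵ := J ⊕ I and V̂ := [[V, A],[0, B*]] (block matrix). Then V̂*ĴV̂ = Ĵ and V̂ĴV̂* ≥ Ĵ; that is, V̂ is a Ĵ-binoncontractive Ĵ-isometry on the Krein space (Ĥ, Ĵ). -/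
/-!
Write `S = J - VJV*` and `N = A² - S`. From `V*JV = J` one gets `SJV = 0`, hence `XJS = X`
whenever `XJV = 0`. Since `A²N = 0`, cancelling with the C⋆-identity (`a² x = 0 → a x = 0` for
self-adjoint `a`) yields `AJV = 0`, then `NJS = N`, `A²JN = 0` and `A²JA² = A²`. So `AJA` is the
identity on `Ran A`, hence on its closure, and vanishes on `Ran A⊥ = ker A`: `AJA = p₊`.
Both `BB*` and `I - p₊` are orthogonal projections onto `Ran B`, so they agree and `AB = 0`.
Multiplying out the operator matrices now gives `V̂*ĴV̂ = Ĵ` and `V̂ĴV̂* - Ĵ = [[N, 0], [0, 0]] ≥ 0`.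
-/

open ContinuousLinearMap

section KreinDefect

variable {R : Type*} [Ring R] [StarRing R]

def kreinDefect (J V : R) : R := J - V * J * star V

variable {J V X : R}

lemma IsSelfAdjoint.kreinDefect (hJ : IsSelfAdjoint J) : IsSelfAdjoint (kreinDefect J V) :=
  hJ.sub (hJ.conjugate V)

lemma mul_mul_kreinDefect_eq_self_of_mul_mul_eq_zero (hJ2 : J * J = 1) (h : X * J * V = 0) :
    X * J * kreinDefect J V = X := by
  rw [kreinDefect, mul_sub, mul_assoc X, hJ2, mul_one, ← mul_assoc, ← mul_assoc, h, zero_mul,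
    zero_mul, sub_zero]

lemma kreinDefect_mul_mul_eq_zero (hJ2 : J * J = 1) (hV : star V * J * V = J) :
    kreinDefect J V * J * V = 0 := by
  calc kreinDefect J V * J * V = J * J * V - V * J * (star V * J * V) := by
        simp only [kreinDefect]; noncomm_ring
    _ = 0 := by rw [hV, hJ2, one_mul, mul_assoc, hJ2, mul_one, sub_self]

end KreinDefect

section CStarRing

variable {R : Type*} [NormedRing R] [StarRing R] [CStarRing R]

lemma IsSelfAdjoint.mul_eq_zero_of_mul_self_mul_eq_zero {a x : R} (ha : IsSelfAdjoint a)
    (h : a * a * x = 0) : a * x = 0 := by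
  refine (CStarRing.star_mul_self_eq_zero_iff _).mp ?_
  rw [star_mul, ha.star_eq, mul_assoc, ← mul_assoc a, h, mul_zero]

variable {J V P A : R}

lemma mul_mul_eq_zero_of_mul_sub_kreinDefect_eq_zero (hJ2 : J * J = 1)
    (hV : star V * J * V = J) (hP : IsSelfAdjoint P) (hPS : P * (P - kreinDefect J V) = 0) :
    P * J * V = 0 := by
  have hPP : P * P = P * kreinDefect J V := sub_eq_zero.mp (by rwa [← mul_sub])
  rw [mul_assoc]
  refine hP.mul_eq_zero_of_mul_self_mul_eq_zero ?_
  rw [hPP, mul_assoc, ← mul_assoc _ J, kreinDefect_mul_mul_eq_zero hJ2 hV, mul_zero]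

lemma mul_mul_self_eq_self_of_mul_sub_kreinDefect_eq_zero (hJ : IsSelfAdjoint J)
    (hJ2 : J * J = 1) (hV : star V * J * V = J) (hP : IsSelfAdjoint P)
    (hPS : P * (P - kreinDefect J V) = 0) : P * J * P = P := by
  set S := kreinDefect J V
  have hPJV := mul_mul_eq_zero_of_mul_sub_kreinDefect_eq_zero hJ2 hV hP hPS
  have hPP : P * P = P * S := sub_eq_zero.mp (by rwa [← mul_sub])
  have hNJS : (P - S) * J * S = P - S := by
    refine mul_mul_kreinDefect_eq_self_of_mul_mul_eq_zero hJ2 ?_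
    rw [sub_mul, sub_mul, hPJV, kreinDefect_mul_mul_eq_zero hJ2 hV, sub_self]
  have hSJN : S * J * (P - S) = P - S := by
    have := congrArg star hNJS
    rwa [star_mul, star_mul, (hP.sub hJ.kreinDefect).star_eq, hJ.kreinDefect.star_eq,
      hJ.star_eq, ← mul_assoc] at this
  have hPJN : P * J * (P - S) = 0 := by
    rw [mul_assoc]
    refine hP.mul_eq_zero_of_mul_self_mul_eq_zero ?_
    rw [hPP, mul_assoc, ← mul_assoc S, hSJN, hPS]
  calc P * J * P = P * J * S + P * J * (P - S) := by noncomm_ring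
    _ = P := by rw [mul_mul_kreinDefect_eq_self_of_mul_mul_eq_zero hJ2 hPJV, hPJN, add_zero]

lemma mul_mul_eq_zero_of_mul_self_mul_sub_kreinDefect_eq_zero (hJ2 : J * J = 1)
    (hV : star V * J * V = J) (hA : IsSelfAdjoint A)
    (hAS : A * A * (A * A - kreinDefect J V) = 0) : A * J * V = 0 := by
  have hAAJV := mul_mul_eq_zero_of_mul_sub_kreinDefect_eq_zero hJ2 hV
    (by simpa only [hA.star_eq] using IsSelfAdjoint.star_mul_self A) hAS
  simpa only [mul_assoc] using
    hA.mul_eq_zero_of_mul_self_mul_eq_zero (x := J * V) (by simpa only [mul_assoc] using hAAJV)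

lemma mul_mul_mul_self_eq_self_of_mul_self_mul_sub_kreinDefect_eq_zero (hJ : IsSelfAdjoint J)
    (hJ2 : J * J = 1) (hV : star V * J * V = J) (hA : IsSelfAdjoint A)
    (hAS : A * A * (A * A - kreinDefect J V) = 0) : A * J * A * A = A := by
  have hPJP := mul_mul_self_eq_self_of_mul_sub_kreinDefect_eq_zero hJ hJ2 hV
    (by simpa only [hA.star_eq] using IsSelfAdjoint.star_mul_self A) hAS
  have h := hA.mul_eq_zero_of_mul_self_mul_eq_zero (x := J * A * A - 1)
    (by simp only [mul_sub, mul_one, ← mul_assoc] at hPJP ⊢; rw [hPJP, sub_self])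
  rwa [mul_sub, mul_one, ← mul_assoc, ← mul_assoc, sub_eq_zero] at h

end CStarRing

section Projection

variable {𝕜 E : Type*} [RCLike 𝕜] [NormedAddCommGroup E] [InnerProductSpace 𝕜 E]
  {A B X Y p : E →L[𝕜] E}

lemma mul_eq_mul_of_range_eq_topologicalClosure
    (hp : LinearMap.range (p : E →ₗ[𝕜] E) = (LinearMap.range (A : E →ₗ[𝕜] E)).topologicalClosure)
    (h : X * A = Y * A) : X * p = Y * p := by
  have hle : (LinearMap.range (A : E →ₗ[𝕜] E)).topologicalClosure ≤
      LinearMap.ker ((X - Y : E →L[𝕜] E) : E →ₗ[𝕜] E) := by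
    refine Submodule.topologicalClosure_minimal _ ?_ (X - Y).isClosed_ker
    rintro _ ⟨x, rfl⟩
    simpa [sub_eq_zero] using congrArg (· x) h
  ext x
  simpa [sub_eq_zero] using hle (hp ▸ LinearMap.mem_range_self (p : E →ₗ[𝕜] E) x)

variable [CompleteSpace E]

lemma mul_eq_self_of_range_eq_topologicalClosure (hp : IsStarProjection p)
    (hA : IsSelfAdjoint A)
    (hpA : LinearMap.range (p : E →ₗ[𝕜] E) = (LinearMap.range (A : E →ₗ[𝕜] E)).topologicalClosure) :
    A * p = A := by
  have hpA' : p * A = A := by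
    refine (LinearMap.IsIdempotentElem.comp_eq_right_iff hp.isIdempotentElem.toLinearMap
      (A : E →ₗ[𝕜] E)).mpr ?_ |> coe_inj.mp
    exact hpA ▸ Submodule.le_topologicalClosure _
  simpa [hA.star_eq, hp.isSelfAdjoint.star_eq] using congrArg star hpA'

lemma mul_mul_eq_of_mul_mul_mul_self_eq (hp : IsStarProjection p) (hA : IsSelfAdjoint A)
    (hpA : LinearMap.range (p : E →ₗ[𝕜] E) = (LinearMap.range (A : E →ₗ[𝕜] E)).topologicalClosure)
    (h : A * X * A * A = A) : A * X * A = p := by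
  have hAp := mul_eq_self_of_range_eq_topologicalClosure hp hA hpA
  calc A * X * A = A * X * A * p := by rw [mul_assoc _ A, hAp]
    _ = 1 * p := mul_eq_mul_of_range_eq_topologicalClosure hpA (by rw [h, one_mul])
    _ = p := one_mul p

lemma mul_star_eq_of_range_eq (hB : star B * B = 1) (hp : IsStarProjection p)
    (hBp : LinearMap.range (B : E →ₗ[𝕜] E) = LinearMap.range (p : E →ₗ[𝕜] E)) :
    B * star B = p := by
  have hBB : IsStarProjection (B * star B) :=
    ⟨by rw [IsIdempotentElem, mul_assoc, ← mul_assoc (star B), hB, one_mul],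
      IsSelfAdjoint.mul_star_self B⟩
  refine hBB.ext hp (hBp ▸ ?_)
  have hsurj : Function.Surjective ⇑(star B) := fun x => ⟨B x, by simpa using congrArg (· x) hB⟩
  exact LinearMap.range_comp_of_range_eq_top _ (LinearMap.range_eq_top.mpr hsurj)

end Projection

section BlockOperator

variable {𝕜 E : Type*} [RCLike 𝕜] [NormedAddCommGroup E] [InnerProductSpace 𝕜 E]

variable (𝕜) in
def blockOp (a b c d : E →L[𝕜] E) : WithLp 2 (E × E) →L[𝕜] WithLp 2 (E × E) :=
  (WithLp.prodContinuousLinearEquiv 2 𝕜 E E).symm.toContinuousLinearMap ∘L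
    ((a ∘L WithLp.fstL 2 𝕜 E E + b ∘L WithLp.sndL 2 𝕜 E E).prod
      (c ∘L WithLp.fstL 2 𝕜 E E + d ∘L WithLp.sndL 2 𝕜 E E))

variable {a b c d a' b' c' d' : E →L[𝕜] E}

@[simp]
lemma blockOp_apply_fst (x : WithLp 2 (E × E)) :
    (blockOp 𝕜 a b c d x).fst = a x.fst + b x.snd :=
  rfl

@[simp]
lemma blockOp_apply_snd (x : WithLp 2 (E × E)) :
    (blockOp 𝕜 a b c d x).snd = c x.fst + d x.snd :=
  rfl

lemma eq_blockOp_iff {T : WithLp 2 (E × E) →L[𝕜] WithLp 2 (E × E)} :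
    T = blockOp 𝕜 a b c d ↔
      ∀ x, (T x).fst = a x.fst + b x.snd ∧ (T x).snd = c x.fst + d x.snd := by
  refine ⟨fun h x => h ▸ ⟨rfl, rfl⟩, fun h => ext fun x => ?_⟩
  exact WithLp.ofLp_injective _ (Prod.ext (h x).1 (h x).2)

lemma blockOp_mul_blockOp :
    blockOp 𝕜 a b c d * blockOp 𝕜 a' b' c' d' =
      blockOp 𝕜 (a * a' + b * c') (a * b' + b * d') (c * a' + d * c') (c * b' + d * d') := by
  refine eq_blockOp_iff.mpr fun x => ⟨?_, ?_⟩ <;> simp <;> abel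

lemma blockOp_sub_blockOp :
    blockOp 𝕜 a b c d - blockOp 𝕜 a' b' c' d' =
      blockOp 𝕜 (a - a') (b - b') (c - c') (d - d') := by
  refine eq_blockOp_iff.mpr fun x => ⟨?_, ?_⟩ <;> simp <;> abel

variable [CompleteSpace E]

lemma star_blockOp :
    star (blockOp 𝕜 a b c d) = blockOp 𝕜 (star a) (star c) (star b) (star d) := by
  simp only [star_eq_adjoint]
  refine ((eq_adjoint_iff _ _).mpr fun x y => ?_).symm
  simp [inner_add_left, inner_add_right, adjoint_inner_left]
  ring

lemma isPositive_blockOp_zero (ha : a.IsPositive) : (blockOp 𝕜 a 0 0 0).IsPositive := by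
  refine isPositive_def'.mpr ⟨?_, fun x => ?_⟩
  · rw [IsSelfAdjoint, star_blockOp, ha.isSelfAdjoint.star_eq, star_zero]
  · simpa [reApplyInnerSelf] using ha.re_inner_nonneg_left x.fst

end BlockOperator

theorem block_dilation_binoncontractive_isometry_general {H : Type*} [NormedAddCommGroup H]
    [InnerProductSpace ℂ H] [CompleteSpace H]
    (J V : H →L[ℂ] H) (hJ : IsSelfAdjoint J) (hJ2 : J ∘L J = 1)
    (hV : ContinuousLinearMap.adjoint V ∘L J ∘L V = J)
    -- the positive part `Spos = (J - VJV*)₊` of `J - VJV*`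
    (Spos : H →L[ℂ] H)
    (hSneg : (Spos - (J - V ∘L J ∘L ContinuousLinearMap.adjoint V)).IsPositive)
    (hSorth : Spos ∘L (Spos - (J - V ∘L J ∘L ContinuousLinearMap.adjoint V)) = 0)
    -- `A = Spos^{1/2}`
    (A : H →L[ℂ] H) (hA : A.IsPositive) (hAsq : A ∘L A = Spos)
    -- `p₊` is the orthogonal projection onto `closure (Ran A)`
    (pp : H →L[ℂ] H) (hppsa : IsSelfAdjoint pp) (hppidem : pp ∘L pp = pp)
    (hpprange : LinearMap.range (pp : H →ₗ[ℂ] H) = (LinearMap.range (A : H →ₗ[ℂ] H)).topologicalClosure)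
    -- `B` is an isometry with final space `Ran (I - p₊)`
    (B : H →L[ℂ] H) (hB : ContinuousLinearMap.adjoint B ∘L B = 1)
    (hBrange : LinearMap.range (B : H →ₗ[ℂ] H) = LinearMap.range (((1 : H →L[ℂ] H) - pp : H →L[ℂ] H) : H →ₗ[ℂ] H))
    -- `Ĵ = J ⊕ I` and `V̂ = [[V, A], [0, B*]]` on `Ĥ = H ⊕ H`
    (Jhat : WithLp 2 (H × H) →L[ℂ] WithLp 2 (H × H))
    (hJhat : ∀ x : WithLp 2 (H × H), (Jhat x).fst = J x.fst ∧ (Jhat x).snd = x.snd)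
    (Vhat : WithLp 2 (H × H) →L[ℂ] WithLp 2 (H × H))
    (hVhat : ∀ x : WithLp 2 (H × H),
      (Vhat x).fst = V x.fst + A x.snd ∧ (Vhat x).snd = ContinuousLinearMap.adjoint B x.snd) :
    ContinuousLinearMap.adjoint Vhat ∘L Jhat ∘L Vhat = Jhat ∧
    (Vhat ∘L Jhat ∘L ContinuousLinearMap.adjoint Vhat - Jhat).IsPositive := by
  simp only [← mul_def, ← star_eq_adjoint, ← mul_assoc] at hJ2 hV hSneg hSorth hAsq hppidem hB
  have hA' : IsSelfAdjoint A := hA.isSelfAdjoint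
  have hAS : A * A * (A * A - kreinDefect J V) = 0 := by rw [hAsq]; exact hSorth
  have hAJV : A * J * V = 0 :=
    mul_mul_eq_zero_of_mul_self_mul_sub_kreinDefect_eq_zero hJ2 hV hA' hAS
  have hVJA : star V * J * A = 0 := by
    simpa [hA'.star_eq, hJ.star_eq, mul_assoc] using congrArg star hAJV
  have hpp : IsStarProjection pp := ⟨hppidem, hppsa⟩
  have hAJA : A * J * A = pp := mul_mul_eq_of_mul_mul_mul_self_eq hpp hA' hpprange
    (mul_mul_mul_self_eq_self_of_mul_self_mul_sub_kreinDefect_eq_zero hJ hJ2 hV hA' hAS)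
  have hBB : B * star B = 1 - pp := mul_star_eq_of_range_eq hB hpp.one_sub hBrange
  have hAB : A * B = 0 := calc
    A * B = A * pp * (B * star B * B) := by
      rw [mul_eq_self_of_range_eq_topologicalClosure hpp hA' hpprange, mul_assoc B, hB, mul_one]
    _ = A * (pp - pp * pp) * B := by rw [hBB]; noncomm_ring
    _ = 0 := by rw [hppidem, sub_self, mul_zero, zero_mul]
  have hBA : star B * A = 0 := by simpa [hA'.star_eq] using congrArg star hAB
  obtain rfl : Vhat = blockOp ℂ V A 0 (adjoint B) :=
    eq_blockOp_iff.mpr fun x => by simpa using hVhat x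
  obtain rfl : Jhat = blockOp ℂ J 0 0 1 := eq_blockOp_iff.mpr fun x => by simpa using hJhat x
  simp only [← star_eq_adjoint, ← mul_def, star_blockOp, blockOp_mul_blockOp, blockOp_sub_blockOp,
    star_star, hA'.star_eq, star_zero, mul_zero, zero_mul, one_mul, add_zero, zero_add,
    ← mul_assoc]
  refine ⟨?_, ?_⟩
  · rw [hV, hVJA, hAJV, hAJA, hBB, add_sub_cancel]
  · rw [hAB, hBA, hB, hAsq, sub_self, sub_self,
      show V * J * star V + Spos - J = Spos - (J - V * J * star V) by abel]
    exact isPositive_blockOp_zero hSneg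

/-- let `V` be a J-isometry, `A = ((J - VJV*)₊)^{1/2}`, `p₊` the range
projection of `A`, and `B` an isometry of `H` with final space `Ran(I - p₊)`. On
`Ĥ = H ⊕ H` with `Ĵ = J ⊕ I`, the block operator `V̂ = [[V, A],[0, B*]]` satisfies
`V̂*ĴV̂ = Ĵ` and `V̂ĴV̂* ≥ Ĵ`: it is a Ĵ-binoncontractive Ĵ-isometry. -/
theorem block_dilation_binoncontractive_isometry {H : Type*} [NormedAddCommGroup H]
    [InnerProductSpace ℂ H] [CompleteSpace H]
    (J V : H →L[ℂ] H) (hJ : IsSelfAdjoint J) (hJ2 : J ∘L J = 1)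
    (hV : ContinuousLinearMap.adjoint V ∘L J ∘L V = J)
    -- the positive part `Spos = (J - VJV*)₊` of `J - VJV*`
    (Spos : H →L[ℂ] H) (hSpos : Spos.IsPositive)
    (hSneg : (Spos - (J - V ∘L J ∘L ContinuousLinearMap.adjoint V)).IsPositive)
    (hSorth : Spos ∘L (Spos - (J - V ∘L J ∘L ContinuousLinearMap.adjoint V)) = 0)
    -- `A = Spos^{1/2}`
    (A : H →L[ℂ] H) (hA : A.IsPositive) (hAsq : A ∘L A = Spos)
    -- `p₊` is the orthogonal projection onto `closure (Ran A)`
    (pp : H →L[ℂ] H) (hppsa : IsSelfAdjoint pp) (hppidem : pp ∘L pp = pp)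
    (hpprange : LinearMap.range (pp : H →ₗ[ℂ] H) = (LinearMap.range (A : H →ₗ[ℂ] H)).topologicalClosure)
    -- `B` is an isometry with final space `Ran (I - p₊)`
    (B : H →L[ℂ] H) (hB : ContinuousLinearMap.adjoint B ∘L B = 1)
    (hBrange : LinearMap.range (B : H →ₗ[ℂ] H) = LinearMap.range (((1 : H →L[ℂ] H) - pp : H →L[ℂ] H) : H →ₗ[ℂ] H))
    -- `Ĵ = J ⊕ I` and `V̂ = [[V, A], [0, B*]]` on `Ĥ = H ⊕ H`
    (Jhat : WithLp 2 (H × H) →L[ℂ] WithLp 2 (H × H))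
    (hJhat : ∀ x : WithLp 2 (H × H), (Jhat x).fst = J x.fst ∧ (Jhat x).snd = x.snd)
    (Vhat : WithLp 2 (H × H) →L[ℂ] WithLp 2 (H × H))
    (hVhat : ∀ x : WithLp 2 (H × H),
      (Vhat x).fst = V x.fst + A x.snd ∧ (Vhat x).snd = ContinuousLinearMap.adjoint B x.snd) :
    ContinuousLinearMap.adjoint Vhat ∘L Jhat ∘L Vhat = Jhat ∧
    (Vhat ∘L Jhat ∘L ContinuousLinearMap.adjoint Vhat - Jhat).IsPositive :=
  block_dilation_binoncontractive_isometry_general J V hJ hJ2 hV Spos hSneg hSorth A hA hAsq pp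
    hppsa hppidem hpprange B hB hBrange Jhat hJhat Vhat hVhat
end

section
/- Let Ĥ = H ⊕ H with Ĵ = J ⊕ I and p(x₁ ⊕ x₂) = x₁. If L is a maximal positive subspace of (Ĥ, Ĵ), then L' := p(L ∩ (H ⊕ {0})) is a maximal positive subspace of (H, J). Moreover, if L is invariant under the block upper-triangular operator V̂ = [[V, A],[0, B*]], then L' is invariant under V. -/
/-!
For a self-adjoint involution `J` one has `‖x + J x‖² = 2‖x‖² + 2 Re⟪x, J x⟫`, so `1 + J` is
bounded below on every `J`-positive subspace. A maximal positive `L` is closed, hence so is its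
image under `1 + J`. A vector of the `+1`-eigenspace orthogonal to that image is `J`-orthogonal to
`L`, so it can be adjoined to `L` without losing positivity; by maximality it lies in `L` and
therefore vanishes. Thus `(1 + J) L = (1 + J) E`: `L` projects onto the positive part.

Applied to `Ĵ` at `(m, 0)` this gives `x ∈ L` with `x₂ = 0` and `(1 + J) x₁ = (1 + J) m`. If `m`
lies in a positive extension `M` of `L'`, then `m - x₁ ∈ M` lies in the `-1`-eigenspace of `J`,
where the form is `-‖·‖²`, so `m = x₁ ∈ L'`. Invariance under `V` is read off the triangular
shape of `V̂`.
-/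

open scoped InnerProductSpace

namespace Submodule

variable {𝕜 E : Type*} [RCLike 𝕜] [NormedAddCommGroup E] [InnerProductSpace 𝕜 E]

def IsJPositive (J : E →L[𝕜] E) (L : Submodule 𝕜 E) : Prop :=
  ∀ x ∈ L, 0 ≤ RCLike.re ⟪x, J x⟫_𝕜

def IsMaximalJPositive (J : E →L[𝕜] E) (L : Submodule 𝕜 E) : Prop :=
  L.IsJPositive J ∧ ∀ M : Submodule 𝕜 E, M.IsJPositive J → L ≤ M → M = L

end Submodule

open Submodule

section FundamentalSymmetry

variable {𝕜 E : Type*} [RCLike 𝕜] [NormedAddCommGroup E] [InnerProductSpace 𝕜 E]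
  {J : E →L[𝕜] E}

theorem norm_add_apply_sq (hJ : (J : E →ₗ[𝕜] E).IsSymmetric) (hJJ : Function.Involutive J)
    (x : E) : ‖x + J x‖ ^ 2 = 2 * ‖x‖ ^ 2 + 2 * RCLike.re ⟪x, J x⟫_𝕜 := by
  have hnorm : ‖J x‖ = ‖x‖ := by
    rw [norm_eq_sqrt_re_inner (𝕜 := 𝕜), norm_eq_sqrt_re_inner (𝕜 := 𝕜),
      ← ContinuousLinearMap.coe_coe J, hJ, ContinuousLinearMap.coe_coe, hJJ]
  rw [norm_add_sq (𝕜 := 𝕜), hnorm]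
  ring

theorem norm_le_norm_add_apply (hJ : (J : E →ₗ[𝕜] E).IsSymmetric) (hJJ : Function.Involutive J)
    {x : E} (hx : 0 ≤ RCLike.re ⟪x, J x⟫_𝕜) : ‖x‖ ≤ ‖x + J x‖ := by
  refine le_of_sq_le_sq ?_ (norm_nonneg _)
  nlinarith [norm_add_apply_sq hJ hJJ x, sq_nonneg ‖x‖]

namespace Submodule

variable {L : Submodule 𝕜 E}

theorem IsJPositive.sup_span_singleton (hL : L.IsJPositive J) (hJ : (J : E →ₗ[𝕜] E).IsSymmetric)
    {w : E} (hw : J w = w) (hLw : ∀ x ∈ L, ⟪x, w⟫_𝕜 = 0) :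
    (L ⊔ span 𝕜 {w}).IsJPositive J := by
  intro z hz
  obtain ⟨x, hx, y, hy, rfl⟩ := mem_sup.mp hz
  obtain ⟨c, rfl⟩ := mem_span_singleton.mp hy
  have hwx : ⟪w, J x⟫_𝕜 = 0 := by
    rw [show ⟪w, J x⟫_𝕜 = ⟪J w, x⟫_𝕜 from (hJ w x).symm, hw, ← inner_conj_symm, hLw x hx,
      map_zero]
  have hexp : ⟪x + c • w, J (x + c • w)⟫_𝕜 = ⟪x, J x⟫_𝕜 + ⟪c • w, c • w⟫_𝕜 := by
    simp only [map_add, map_smul, hw, inner_add_left, inner_add_right, inner_smul_left,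
      inner_smul_right, hLw x hx, hwx, mul_zero, add_zero, zero_add]
  rw [hexp, map_add]
  exact add_nonneg (hL x hx) inner_self_nonneg

theorem IsMaximalJPositive.isClosed (hL : L.IsMaximalJPositive J) : IsClosed (L : Set E) := by
  have hclosed : IsClosed {x : E | 0 ≤ RCLike.re ⟪x, J x⟫_𝕜} :=
    isClosed_le continuous_const (by fun_prop)
  have hpos : L.topologicalClosure.IsJPositive J := fun x hx =>
    closure_minimal hL.1 hclosed (by rwa [← topologicalClosure_coe])
  rw [← hL.2 _ hpos L.le_topologicalClosure]
  exact L.isClosed_topologicalClosure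

theorem IsMaximalJPositive.isClosed_map_one_add [CompleteSpace E] (hL : L.IsMaximalJPositive J)
    (hJ : (J : E →ₗ[𝕜] E).IsSymmetric) (hJJ : Function.Involutive J) :
    IsClosed (L.map ((1 + J : E →L[𝕜] E) : E →ₗ[𝕜] E) : Set E) := by
  have : CompleteSpace L := hL.isClosed.completeSpace_coe
  let f := (1 + J).comp L.subtypeL
  have hf : AntilipschitzWith 1 f := f.antilipschitz_of_bound fun x => by
    rw [NNReal.coe_one, one_mul]
    exact norm_le_norm_add_apply hJ hJJ (hL.1 x x.2)
  have hrange : Set.range f = L.map ((1 + J : E →L[𝕜] E) : E →ₗ[𝕜] E) := by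
    ext y; simp [f]
  rw [← hrange]
  exact hf.isClosed_range f.uniformContinuous

theorem IsMaximalJPositive.exists_add_apply_eq [CompleteSpace E] (hL : L.IsMaximalJPositive J)
    (hJ : (J : E →ₗ[𝕜] E).IsSymmetric) (hJJ : Function.Involutive J) (v : E) :
    ∃ x ∈ L, x + J x = v + J v := by
  set S := L.map ((1 + J : E →L[𝕜] E) : E →ₗ[𝕜] E)
  have : CompleteSpace S := (hL.isClosed_map_one_add hJ hJJ).completeSpace_coe
  obtain ⟨s, ⟨x, hx, rfl⟩, w, hw, hvw⟩ := S.exists_add_mem_mem_orthogonal (v + J v)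
  simp only [ContinuousLinearMap.coe_coe, add_apply, one_apply_eq_self] at hvw
  have hJw : J w = w := by
    rw [eq_sub_of_add_eq' hvw.symm, map_sub, map_add, map_add, hJJ, hJJ, add_comm (J v),
      add_comm (J x)]
  have hLw : ∀ y ∈ L, ⟪y, w⟫_𝕜 = 0 := fun y hy => by
    have h := (mem_orthogonal S w).mp hw _ (mem_map_of_mem hy)
    simp only [ContinuousLinearMap.coe_coe, add_apply, one_apply_eq_self, inner_add_left] at h
    rw [show ⟪J y, w⟫_𝕜 = ⟪y, J w⟫_𝕜 from hJ y w, hJw, ← two_mul] at h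
    exact (mul_eq_zero.mp h).resolve_left two_ne_zero
  have hwL : w ∈ L := by
    rw [← hL.2 _ (hL.1.sup_span_singleton hJ hJw hLw) le_sup_left]
    exact mem_sup_right (mem_span_singleton_self w)
  refine ⟨x, hx, ?_⟩
  rw [hvw, inner_self_eq_zero.mp (hLw w hwL), add_zero]

end Submodule

end FundamentalSymmetry

section BlockDiagonal

variable {𝕜 H : Type*} [RCLike 𝕜] [NormedAddCommGroup H] [InnerProductSpace 𝕜 H]
  {J : H →L[𝕜] H} {Jhat : WithLp 2 (H × H) →L[𝕜] WithLp 2 (H × H)}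
  {p q : WithLp 2 (H × H) →L[𝕜] H} {L : Submodule 𝕜 (WithLp 2 (H × H))}

theorem re_inner_apply_eq_add_norm_sq
    (hJhat : ∀ x : WithLp 2 (H × H), (Jhat x).ofLp.1 = J x.ofLp.1 ∧ (Jhat x).ofLp.2 = x.ofLp.2)
    (x : WithLp 2 (H × H)) :
    RCLike.re ⟪x, Jhat x⟫_𝕜 = RCLike.re ⟪x.ofLp.1, J x.ofLp.1⟫_𝕜 + ‖x.ofLp.2‖ ^ 2 := by
  rw [WithLp.prod_inner_apply, (hJhat x).1, (hJhat x).2, map_add, inner_self_eq_norm_sq]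

theorem isSymmetric_of_fst_snd (hJ : (J : H →ₗ[𝕜] H).IsSymmetric)
    (hJhat : ∀ x : WithLp 2 (H × H), (Jhat x).ofLp.1 = J x.ofLp.1 ∧ (Jhat x).ofLp.2 = x.ofLp.2) :
    (Jhat : WithLp 2 (H × H) →ₗ[𝕜] WithLp 2 (H × H)).IsSymmetric := fun x y => by
  simp only [ContinuousLinearMap.coe_coe, WithLp.prod_inner_apply, (hJhat x).1, (hJhat x).2,
    (hJhat y).1, (hJhat y).2]
  rw [show ⟪J x.ofLp.1, y.ofLp.1⟫_𝕜 = ⟪x.ofLp.1, J y.ofLp.1⟫_𝕜 from hJ _ _]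

theorem involutive_of_fst_snd (hJJ : Function.Involutive J)
    (hJhat : ∀ x : WithLp 2 (H × H), (Jhat x).ofLp.1 = J x.ofLp.1 ∧ (Jhat x).ofLp.2 = x.ofLp.2) :
    Function.Involutive Jhat := fun x =>
  WithLp.ofLp_injective 2 <| Prod.ext (by rw [(hJhat _).1, (hJhat x).1, hJJ])
    (by rw [(hJhat _).2, (hJhat x).2])

theorem mem_map_inf_ker_iff (hp : ∀ x : WithLp 2 (H × H), p x = x.ofLp.1)
    (hq : ∀ x : WithLp 2 (H × H), q x = x.ofLp.2) {y : H} :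
    y ∈ (L ⊓ LinearMap.ker (q : WithLp 2 (H × H) →ₗ[𝕜] H)).map (p : WithLp 2 (H × H) →ₗ[𝕜] H) ↔
      ∃ x ∈ L, x.ofLp.2 = 0 ∧ x.ofLp.1 = y := by
  simp only [mem_map, mem_inf, LinearMap.mem_ker,
    ContinuousLinearMap.coe_coe, hp, hq, and_assoc]

theorem apply_mem_map_inf_ker {V A Bstar : H →L[𝕜] H}
    {Vhat : WithLp 2 (H × H) →L[𝕜] WithLp 2 (H × H)}
    (hp : ∀ x : WithLp 2 (H × H), p x = x.ofLp.1) (hq : ∀ x : WithLp 2 (H × H), q x = x.ofLp.2)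
    (hVhat : ∀ x : WithLp 2 (H × H),
      (Vhat x).ofLp.1 = V x.ofLp.1 + A x.ofLp.2 ∧ (Vhat x).ofLp.2 = Bstar x.ofLp.2)
    (hL : ∀ x ∈ L, Vhat x ∈ L) {y : H}
    (hy : y ∈ (L ⊓ LinearMap.ker (q : WithLp 2 (H × H) →ₗ[𝕜] H)).map
      (p : WithLp 2 (H × H) →ₗ[𝕜] H)) :
    V y ∈ (L ⊓ LinearMap.ker (q : WithLp 2 (H × H) →ₗ[𝕜] H)).map
      (p : WithLp 2 (H × H) →ₗ[𝕜] H) := by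
  obtain ⟨x, hxL, hx2, rfl⟩ := (mem_map_inf_ker_iff hp hq).mp hy
  refine (mem_map_inf_ker_iff hp hq).mpr ⟨Vhat x, hL x hxL, ?_, ?_⟩
  · rw [(hVhat x).2, hx2, map_zero]
  · rw [(hVhat x).1, hx2, map_zero, add_zero]

namespace Submodule

theorem IsJPositive.map_inf_ker
    (hJhat : ∀ x : WithLp 2 (H × H), (Jhat x).ofLp.1 = J x.ofLp.1 ∧ (Jhat x).ofLp.2 = x.ofLp.2)
    (hp : ∀ x : WithLp 2 (H × H), p x = x.ofLp.1) (hq : ∀ x : WithLp 2 (H × H), q x = x.ofLp.2)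
    (hL : L.IsJPositive Jhat) :
    ((L ⊓ LinearMap.ker (q : WithLp 2 (H × H) →ₗ[𝕜] H)).map
      (p : WithLp 2 (H × H) →ₗ[𝕜] H)).IsJPositive J := by
  intro y hy
  obtain ⟨x, hxL, hx2, rfl⟩ := (mem_map_inf_ker_iff hp hq).mp hy
  have hx := hL x hxL
  rwa [re_inner_apply_eq_add_norm_sq hJhat, hx2, norm_zero, sq, mul_zero, add_zero] at hx

theorem IsMaximalJPositive.map_inf_ker [CompleteSpace H] (hJ : (J : H →ₗ[𝕜] H).IsSymmetric)
    (hJJ : Function.Involutive J)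
    (hJhat : ∀ x : WithLp 2 (H × H), (Jhat x).ofLp.1 = J x.ofLp.1 ∧ (Jhat x).ofLp.2 = x.ofLp.2)
    (hp : ∀ x : WithLp 2 (H × H), p x = x.ofLp.1) (hq : ∀ x : WithLp 2 (H × H), q x = x.ofLp.2)
    (hL : L.IsMaximalJPositive Jhat) :
    ((L ⊓ LinearMap.ker (q : WithLp 2 (H × H) →ₗ[𝕜] H)).map
      (p : WithLp 2 (H × H) →ₗ[𝕜] H)).IsMaximalJPositive J := by
  refine ⟨hL.1.map_inf_ker hJhat hp hq, fun M hM hLM => le_antisymm (fun m hm => ?_) hLM⟩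
  obtain ⟨x, hxL, hx⟩ := hL.exists_add_apply_eq (isSymmetric_of_fst_snd hJ hJhat)
    (involutive_of_fst_snd hJJ hJhat) (WithLp.toLp 2 (m, 0))
  have hx1 : x.ofLp.1 + J x.ofLp.1 = m + J m := by
    have h := congr(($hx).ofLp.1)
    rwa [WithLp.ofLp_add, WithLp.ofLp_add, Prod.fst_add, Prod.fst_add, (hJhat _).1,
      (hJhat _).1] at h
  have hx2 : x.ofLp.2 = 0 := by
    have h := congr(($hx).ofLp.2)
    rw [WithLp.ofLp_add, WithLp.ofLp_add, Prod.snd_add, Prod.snd_add, (hJhat _).2,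
      (hJhat _).2, WithLp.ofLp_toLp, add_zero, ← two_smul 𝕜] at h
    exact (smul_eq_zero.mp h).resolve_left two_ne_zero
  have hxM : x.ofLp.1 ∈ M := hLM ((mem_map_inf_ker_iff hp hq).mpr ⟨x, hxL, hx2, rfl⟩)
  have hdiff : m - x.ofLp.1 = 0 := by
    refine norm_le_zero_iff.mp ((norm_le_norm_add_apply hJ hJJ (hM _ (sub_mem hm hxM))).trans ?_)
    rw [map_sub, sub_add_sub_comm, hx1, sub_self, norm_zero]
  rw [sub_eq_zero.mp hdiff]
  exact (mem_map_inf_ker_iff hp hq).mpr ⟨x, hxL, hx2, rfl⟩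

end Submodule

end BlockDiagonal

/-- on `Ĥ = H ⊕ H` with `Ĵ = J ⊕ I` and `p(x₁ ⊕ x₂) = x₁`: if `L` is a
maximal positive subspace of `(Ĥ, Ĵ)`, then `L' = p(L ∩ (H ⊕ {0}))` is a maximal
positive subspace of `(H, J)`; if moreover `L` is invariant under the block
upper-triangular `V̂ = [[V, A],[0, B*]]`, then `L'` is invariant under `V`. -/
theorem block_invariant_subspace_restriction {H : Type*} [NormedAddCommGroup H]
    [InnerProductSpace ℂ H] [CompleteSpace H]
    (J : H →L[ℂ] H) (hJ : IsSelfAdjoint J) (hJ2 : J ∘L J = 1)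
    (Jhat : WithLp 2 (H × H) →L[ℂ] WithLp 2 (H × H))
    (hJhat : ∀ x : WithLp 2 (H × H), (Jhat x).ofLp.1 = J x.ofLp.1 ∧ (Jhat x).ofLp.2 = x.ofLp.2)
    (p q : WithLp 2 (H × H) →L[ℂ] H)
    (hp : ∀ x : WithLp 2 (H × H), p x = x.ofLp.1)
    (hq : ∀ x : WithLp 2 (H × H), q x = x.ofLp.2)
    (V A Bstar : H →L[ℂ] H)
    (Vhat : WithLp 2 (H × H) →L[ℂ] WithLp 2 (H × H))
    (hVhat : ∀ x : WithLp 2 (H × H),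
      (Vhat x).ofLp.1 = V x.ofLp.1 + A x.ofLp.2 ∧ (Vhat x).ofLp.2 = Bstar x.ofLp.2)
    (L : Submodule ℂ (WithLp 2 (H × H)))
    (hLpos : ∀ x ∈ L, 0 ≤ (inner ℂ x (Jhat x) : ℂ).re)
    (hLmax : ∀ M : Submodule ℂ (WithLp 2 (H × H)),
      (∀ x ∈ M, 0 ≤ (inner ℂ x (Jhat x) : ℂ).re) → L ≤ M → M = L) :
    ((∀ y ∈ (L ⊓ LinearMap.ker (q : WithLp 2 (H × H) →ₗ[ℂ] H)).map (p : WithLp 2 (H × H) →ₗ[ℂ] H), 0 ≤ (inner ℂ y (J y) : ℂ).re) ∧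
      (∀ M : Submodule ℂ H, (∀ y ∈ M, 0 ≤ (inner ℂ y (J y) : ℂ).re) →
        (L ⊓ LinearMap.ker (q : WithLp 2 (H × H) →ₗ[ℂ] H)).map (p : WithLp 2 (H × H) →ₗ[ℂ] H) ≤ M → M = (L ⊓ LinearMap.ker (q : WithLp 2 (H × H) →ₗ[ℂ] H)).map (p : WithLp 2 (H × H) →ₗ[ℂ] H))) ∧
    ((∀ x ∈ L, Vhat x ∈ L) →
      ∀ y ∈ (L ⊓ LinearMap.ker (q : WithLp 2 (H × H) →ₗ[ℂ] H)).map
        (p : WithLp 2 (H × H) →ₗ[ℂ] H), V y ∈ (L ⊓ LinearMap.ker (q : WithLp 2 (H × H) →ₗ[ℂ] H)).map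
        (p : WithLp 2 (H × H) →ₗ[ℂ] H)) := by
  have hJJ : Function.Involutive J := fun x => by simpa using congr($hJ2 x)
  exact ⟨IsMaximalJPositive.map_inf_ker hJ.isSymmetric hJJ hJhat hp hq ⟨hLpos, hLmax⟩,
    fun hV _ => apply_mem_map_inf_ker hp hq hVhat hV⟩
end
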